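/- arXiv:2006.12851 — 9 statements merged into one kernel-verified Lean document; each statement's English description precedes it below -/
import Mathlib

section
/- Let a, b, m > 0 and let c be a real number with c < 2√a. Then there exist no twice continuously differentiable functions U, V : ℝ → ℝ with U(z) ≥ 0 and V(z) ≥ 0 for all z ∈ ℝ, solving the travelling-wave system (γ(V)U)'' + cU' + U(a − bU) = 0 and V'' + cV' + U − V = 0 on ℝ, and satisfying lim_{z→−∞} U(z) = lim_{z→−∞} V(z) = a/b and lim_{z→+∞} U(z) = lim_{z→+∞} V(z) = 0. -/
/-!
Write `W = γ(V) U` and `T = W' + c U`; the first equation says `T' = -U (a - b U)`.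
Since `(W, T)` solves a linear system, a zero of `U ≥ 0` (a minimum of `W`, so also a zero of
`T`) would force `U ≡ 0`; hence `U > 0`. If `c ≤ 0`, `T` is eventually nonincreasing and cannot
become negative (else `W' < 0` uniformly, against `W → 0`), so `W` is eventually nondecreasing,
impossible for a positive function tending to `0`. If `0 < c < 2√a`, the second equation gives
`V' → 0`, and `r = W' / W` solves a Riccati equation `r' = -(r² + p r + q)` with `p → c`,
`q → a`; as `r² + c r + a` has no real root, `r` reaches `-∞` in finite time.
-/

open Real Filter Set Topology

theorem tendsto_atTop_of_eventually_le_deriv {f f' : ℝ → ℝ} {ε : ℝ} (hε : 0 < ε)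
    (hf : ∀ᶠ x in atTop, HasDerivAt f (f' x) x ∧ ε ≤ f' x) : Tendsto f atTop atTop := by
  obtain ⟨Z, hZ⟩ := eventually_atTop.mp hf
  have hd : ∀ x, Z ≤ x → HasDerivAt (fun x => f x - ε * x) (f' x - ε) x := fun x hx => by
    have := (hZ x hx).1.sub ((hasDerivAt_id' x).const_mul ε)
    rwa [mul_one] at this
  have hmono : MonotoneOn (fun x => f x - ε * x) (Ici Z) := by
    refine monotoneOn_of_hasDerivWithinAt_nonneg (f' := fun x => f' x - ε) (convex_Ici Z)
      (fun x hx => (hd x hx).continuousAt.continuousWithinAt)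
      (fun x hx => ?_) (fun x hx => ?_) <;> rw [interior_Ici] at hx
    · exact (hd x hx.le).hasDerivWithinAt
    · exact sub_nonneg.mpr (hZ x hx.le).2
  refine tendsto_atTop_mono' atTop ((eventually_ge_atTop Z).mono fun x hx => ?_)
    (tendsto_atTop_add_const_left atTop (f Z - ε * Z) (tendsto_id.const_mul_atTop hε))
  have := hmono self_mem_Ici hx hx
  simp only [id]
  linarith

theorem tendsto_zero_of_tendsto_deriv_add_const_mul {y y' : ℝ → ℝ} {c : ℝ} (hc : 0 < c)
    (hy : ∀ x, HasDerivAt y (y' x) x) (hlim : Tendsto (fun x => y' x + c * y x) atTop (𝓝 0)) :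
    Tendsto y atTop (𝓝 0) := by
  rw [Metric.tendsto_atTop]
  intro ε hε
  obtain ⟨Z, hZ⟩ := eventually_atTop.mp <|
    (Metric.tendsto_nhds.mp hlim) (c * (ε / 2)) (by positivity)
  set g := fun x => exp (c * x) * y x
  have hg : ∀ x, HasDerivAt g (exp (c * x) * (y' x + c * y x)) x := fun x =>
    ((((hasDerivAt_id' x).const_mul c).exp).mul (hy x)).congr_deriv (by ring)
  have hB : ∀ x, HasDerivAt (fun x => |g Z| + ε / 2 * exp (c * x))
      (ε / 2 * (exp (c * x) * c)) x := fun x =>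
    ((((hasDerivAt_id' x).const_mul c).exp).const_mul (ε / 2)).const_add (|g Z|)
      |>.congr_deriv (by ring)
  have hgle : ∀ x, Z ≤ x → |g x| ≤ |g Z| + ε / 2 * exp (c * x) := fun x hx =>
    image_norm_le_of_norm_deriv_right_le_deriv_boundary (f := g) (a := Z) (b := x)
      (fun t _ => (hg t).continuousAt.continuousWithinAt) (fun t _ => (hg t).hasDerivWithinAt)
      (by simp [Real.norm_eq_abs]; positivity) hB
      (fun t ht => by
        have := hZ t ht.1
        rw [dist_zero_right, Real.norm_eq_abs] at this
        rw [Real.norm_eq_abs, abs_mul, abs_of_pos (exp_pos _)]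
        nlinarith [exp_pos (c * t)])
      ⟨hx, le_rfl⟩
  have hdecay : Tendsto (fun x => |g Z| / exp (c * x)) atTop (𝓝 0) :=
    tendsto_const_nhds.div_atTop (tendsto_exp_atTop.comp (tendsto_id.const_mul_atTop hc))
  obtain ⟨Z', hZ'⟩ := eventually_atTop.mp <|
    (Metric.tendsto_nhds.mp hdecay) (ε / 2) (by positivity)
  refine ⟨max Z Z', fun x hx => ?_⟩
  have h1 := hgle x (le_of_max_le_left hx)
  have h2 := hZ' x (le_of_max_le_right hx)
  rw [dist_zero_right, Real.norm_eq_abs, abs_of_nonneg (by positivity)] at h2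
  have hex := exp_pos (c * x)
  rw [dist_zero_right, Real.norm_eq_abs]
  have : |y x| = |g x| / exp (c * x) := by
    simp only [g, abs_mul, abs_of_pos hex]; field_simp
  rw [this, div_lt_iff₀ hex]
  rw [div_lt_iff₀ hex] at h2
  linarith

theorem eq_zero_of_hasDerivAt_clm_apply {E : Type*} [NormedAddCommGroup E] [NormedSpace ℝ E]
    {A : ℝ → E →L[ℝ] E} (hA : Continuous A) {f : ℝ → E}
    (hf : ∀ t, HasDerivAt f (A t (f t)) t) {s : ℝ} (hs : f s = 0) : f = 0 := by
  funext t
  set a := min t s - 1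
  set b := max t s + 1
  obtain ⟨t₀, -, hK⟩ := isCompact_Icc.exists_isMaxOn (nonempty_Icc.mpr (by grind : a ≤ b))
    (continuous_nnnorm.comp hA).continuousOn
  have hsub : Ioo a b ⊆ Icc a b := Ioo_subset_Icc_self
  refine ODE_solution_unique_of_mem_Icc (s := fun _ => univ) (g := 0) (t₀ := s)
    (fun τ hτ => ((A τ).lipschitz.weaken (hK (hsub hτ))).lipschitzOnWith)
    ⟨by grind, by grind⟩ (HasDerivAt.continuousOn fun τ _ => hf τ) (fun τ _ => hf τ)
    (fun _ _ => trivial) continuousOn_const (fun τ _ => by simp)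
    (fun _ _ => trivial) hs ⟨by grind, by grind⟩

theorem not_eventually_hasDerivAt_riccati {r p q : ℝ → ℝ} {c a : ℝ}
    (hp : Tendsto p atTop (𝓝 c)) (hq : Tendsto q atTop (𝓝 a)) (hca : c ^ 2 < 4 * a) :
    ¬ ∀ᶠ z in atTop, HasDerivAt r (-(r z ^ 2 + p z * r z + q z)) z := by
  intro hr
  set κ := (4 * a - c ^ 2) / 8
  have hκ : 0 < κ := by simp only [κ]; linarith
  have hdisc : ∀ᶠ z in atTop, κ ≤ q z - p z ^ 2 / 4 :=
    (hq.sub ((hp.pow 2).div_const 4)).eventually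
      (eventually_ge_nhds (by simp only [κ]; linarith))
  have hpbdd : ∀ᶠ z in atTop, |p z| ≤ |c| + 1 :=
    hp.abs.eventually (eventually_le_nhds (by linarith))
  -- completing the square, `r' ≤ -κ`
  have hr_atBot : Tendsto r atTop atBot := by
    refine tendsto_neg_atTop_iff.mp (tendsto_atTop_of_eventually_le_deriv hκ
      ((hr.and hdisc).mono fun z ⟨hz, hκz⟩ => ⟨hz.neg, ?_⟩))
    nlinarith [sq_nonneg (r z + p z / 2)]
  -- once `r ≤ -2 (|c| + 1)`, `r' ≤ -r² / 2`, so `1 / r` grows at least linearly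
  have hinv : Tendsto (fun z => (r z)⁻¹) atTop atTop := by
    have hr_le := hr_atBot.eventually (eventually_le_atBot (-(2 * (|c| + 1))))
    refine tendsto_atTop_of_eventually_le_deriv
      (f' := fun z => (r z ^ 2 + p z * r z + q z) / r z ^ 2) (by norm_num : (0 : ℝ) < 1 / 2)
      ((hr.and (hdisc.and (hpbdd.and hr_le))).mono fun z ⟨hz, hκz, hpz, hrz⟩ => ?_)
    have hr0 : r z < 0 := by linarith [abs_nonneg c]
    refine ⟨(hz.inv hr0.ne).congr_deriv (by rw [neg_neg]), ?_⟩
    rw [le_div_iff₀ (by nlinarith)]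
    have h1 : |p z| * r z ≤ p z * r z := by nlinarith [neg_abs_le (p z), le_abs_self (p z)]
    nlinarith [abs_nonneg (p z)]
  obtain ⟨z, hz_pos, hz_neg⟩ := ((hinv.eventually (eventually_gt_atTop 0)).and
    (hr_atBot.eventually (eventually_lt_atBot 0))).exists
  exact absurd hz_pos (not_lt.mpr (inv_nonpos.mpr hz_neg.le))

/-- `γ(V) U` with `γ(v) = (1 + v) ^ (-m)`. -/
noncomputable def motilityWeighted (m : ℝ) (U V : ℝ → ℝ) (z : ℝ) : ℝ :=
  (1 + V z) ^ (-m) * U z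

structure IsTravellingWave (a b m c : ℝ) (U V : ℝ → ℝ) : Prop where
  contDiff_U : ContDiff ℝ 2 U
  contDiff_V : ContDiff ℝ 2 V
  U_nonneg : ∀ z, 0 ≤ U z
  V_nonneg : ∀ z, 0 ≤ V z
  eq_U : ∀ z, deriv (deriv (motilityWeighted m U V)) z + c * deriv U z
    + U z * (a - b * U z) = 0
  eq_V : ∀ z, deriv (deriv V) z + c * deriv V z + U z - V z = 0
  tendsto_U_atBot : Tendsto U atBot (𝓝 (a / b))
  tendsto_V_atBot : Tendsto V atBot (𝓝 (a / b))
  tendsto_U_atTop : Tendsto U atTop (𝓝 0)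
  tendsto_V_atTop : Tendsto V atTop (𝓝 0)

namespace IsTravellingWave

variable {a b m c : ℝ} {U V : ℝ → ℝ}

theorem one_add_V_pos (hw : IsTravellingWave a b m c U V) (z : ℝ) : 0 < 1 + V z := by
  linarith [hw.V_nonneg z]

theorem contDiff_motilityWeighted (hw : IsTravellingWave a b m c U V) :
    ContDiff ℝ 2 (motilityWeighted m U V) :=
  ((contDiff_const.add hw.contDiff_V).rpow_const_of_ne fun z => (hw.one_add_V_pos z).ne').mul
    hw.contDiff_U

theorem motilityWeighted_pos (hw : IsTravellingWave a b m c U V) {z : ℝ} (hz : 0 < U z) :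
    0 < motilityWeighted m U V z :=
  mul_pos (rpow_pos_of_pos (hw.one_add_V_pos z) _) hz

theorem U_eq_mul_motilityWeighted (hw : IsTravellingWave a b m c U V) (z : ℝ) :
    U z = (1 + V z) ^ m * motilityWeighted m U V z := by
  rw [motilityWeighted, ← mul_assoc, ← rpow_add (hw.one_add_V_pos z), add_neg_cancel, rpow_zero,
    one_mul]

theorem tendsto_motilityWeighted_atTop (hw : IsTravellingWave a b m c U V) :
    Tendsto (motilityWeighted m U V) atTop (𝓝 0) := by
  have := ((tendsto_const_nhds (x := (1 : ℝ)).add hw.tendsto_V_atTop).rpow_const (p := -m)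
    (.inl (by norm_num))).mul hw.tendsto_U_atTop
  rwa [mul_zero] at this

theorem hasDerivAt_flux (hw : IsTravellingWave a b m c U V) (z : ℝ) :
    HasDerivAt (fun y => deriv (motilityWeighted m U V) y + c * U y)
      (-(U z * (a - b * U z))) z :=
  ((hw.contDiff_motilityWeighted.differentiable_deriv_two z).hasDerivAt.add
    ((hw.contDiff_U.differentiable (by norm_num) z).hasDerivAt.const_mul c)).congr_deriv
      (by linarith [hw.eq_U z])

theorem motilityWeighted_nonneg (hw : IsTravellingWave a b m c U V) (z : ℝ) :
    0 ≤ motilityWeighted m U V z :=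
  mul_nonneg (rpow_nonneg (hw.one_add_V_pos z).le _) (hw.U_nonneg z)

theorem U_eq_zero_of_apply_eq_zero (hw : IsTravellingWave a b m c U V) {z : ℝ} (hz : U z = 0) :
    U = 0 := by
  have hWz : motilityWeighted m U V z = 0 := by simp [motilityWeighted, hz]
  have hW'z : deriv (motilityWeighted m U V) z = 0 :=
    IsLocalMin.deriv_eq_zero <| .of_forall fun y => hWz ▸ hw.motilityWeighted_nonneg y
  -- `(W, W' + c U)` with `W = γ(V) U` solves a linear system and vanishes at `z`
  let A : ℝ → ℝ × ℝ →L[ℝ] ℝ × ℝ := fun t =>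
    (ContinuousLinearMap.snd ℝ ℝ ℝ).prod 0
      - (c * (1 + V t) ^ m) • (ContinuousLinearMap.fst ℝ ℝ ℝ).prod 0
      - ((1 + V t) ^ m * (a - b * U t)) •
          (0 : ℝ × ℝ →L[ℝ] ℝ).prod (ContinuousLinearMap.fst ℝ ℝ ℝ)
  have hUc := hw.contDiff_U.continuous
  have hh : Continuous fun t => (1 + V t) ^ m := (continuous_const.add hw.contDiff_V.continuous)
    |>.rpow_const fun t => .inl (hw.one_add_V_pos t).ne'
  have hsol := eq_zero_of_hasDerivAt_clm_apply (A := A) (by fun_prop)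
    (f := fun t => (motilityWeighted m U V t, deriv (motilityWeighted m U V) t + c * U t))
    (fun t => ?_) (s := z) (by simp [hWz, hW'z, hz])
  · funext t
    have hWt : motilityWeighted m U V t = 0 := congrArg Prod.fst (congrFun hsol t)
    rw [hw.U_eq_mul_motilityWeighted t, hWt, mul_zero, Pi.zero_apply]
  · have hWd := (hw.contDiff_motilityWeighted.differentiable (by norm_num) t).hasDerivAt
    refine (hWd.prodMk (hw.hasDerivAt_flux t)).congr_deriv ?_
    simp only [A, sub_apply, ContinuousLinearMap.prod_apply, ContinuousLinearMap.coe_snd',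
      ContinuousLinearMap.coe_fst', zero_apply, smul_apply, Prod.smul_mk, smul_eq_mul, mul_zero,
      Prod.mk_sub_mk, sub_self, sub_zero, zero_sub, Prod.mk.injEq, neg_inj]
    rw [hw.U_eq_mul_motilityWeighted t]
    constructor <;> ring

theorem U_pos (hw : IsTravellingWave a b m c U V) (ha : 0 < a) (hb : 0 < b) (z : ℝ) :
    0 < U z := by
  refine (hw.U_nonneg z).lt_of_ne' fun hz => (div_pos ha hb).ne' ?_
  have := hw.tendsto_U_atBot
  rw [hw.U_eq_zero_of_apply_eq_zero hz] at this
  exact tendsto_nhds_unique this tendsto_const_nhds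

theorem eventually_flux_nonneg (hw : IsTravellingWave a b m c U V) (ha : 0 < a) (hb : 0 < b) :
    ∀ᶠ z in atTop, 0 ≤ deriv (motilityWeighted m U V) z + c * U z := by
  set T := fun y => deriv (motilityWeighted m U V) y + c * U y
  obtain ⟨Z, hZ⟩ := eventually_atTop.mp
    (hw.tendsto_U_atTop.eventually (eventually_le_nhds (div_pos ha hb)))
  have hanti : AntitoneOn T (Ici Z) :=
    antitoneOn_of_hasDerivWithinAt_nonpos (convex_Ici Z)
      (fun z _ => (hw.hasDerivAt_flux z).continuousAt.continuousWithinAt)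
      (fun z _ => (hw.hasDerivAt_flux z).hasDerivWithinAt) fun z hz => by
        rw [interior_Ici] at hz
        have := (le_div_iff₀' hb).mp (hZ z hz.le)
        nlinarith [hw.U_nonneg z]
  refine eventually_atTop.mpr ⟨Z, fun z₁ hz₁ => not_lt.mp fun hneg => ?_⟩
  -- past `z₁`, `(γ(V) U)' ≤ T z₁ / 2 < 0`, so `γ(V) U` would become negative
  have hlim : Tendsto (fun y => -motilityWeighted m U V y) atTop atTop := by
    refine tendsto_atTop_of_eventually_le_deriv (f' := fun y => -deriv (motilityWeighted m U V) y)
      (ε := -T z₁ / 2) (by linarith) ?_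
    filter_upwards [eventually_ge_atTop z₁,
      (hw.tendsto_U_atTop.const_mul c).eventually
        (eventually_ge_nhds (by linarith : T z₁ / 2 < c * 0))]
      with y hy hcU
    refine ⟨(hw.contDiff_motilityWeighted.differentiable (by norm_num) y).hasDerivAt.neg, ?_⟩
    have := hanti (mem_Ici.mpr hz₁) (mem_Ici.mpr (hz₁.trans hy)) hy
    simp only [T] at this
    linarith
  exact not_tendsto_nhds_of_tendsto_atTop hlim 0
    (by simpa using hw.tendsto_motilityWeighted_atTop.neg)

theorem false_of_speed_nonpos (hw : IsTravellingWave a b m c U V) (ha : 0 < a) (hb : 0 < b)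
    (hc : c ≤ 0) : False := by
  obtain ⟨Z, hZ⟩ := eventually_atTop.mp (hw.eventually_flux_nonneg ha hb)
  have hW := hw.contDiff_motilityWeighted
  have hmono : MonotoneOn (motilityWeighted m U V) (Ici Z) :=
    monotoneOn_of_hasDerivWithinAt_nonneg (convex_Ici Z) hW.continuous.continuousOn
      (fun z _ => (hW.differentiable (by norm_num) z).hasDerivAt.hasDerivWithinAt) fun z hz => by
        rw [interior_Ici] at hz
        nlinarith [hZ z hz.le, hw.U_nonneg z]
  have := ge_of_tendsto hw.tendsto_motilityWeighted_atTop
    (eventually_atTop.mpr ⟨Z, fun y hy => hmono self_mem_Ici hy hy⟩)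
  exact (hw.motilityWeighted_pos (hw.U_pos ha hb Z)).not_ge this

theorem tendsto_deriv_V_atTop (hw : IsTravellingWave a b m c U V) (hc : 0 < c) :
    Tendsto (deriv V) atTop (𝓝 0) := by
  refine tendsto_zero_of_tendsto_deriv_add_const_mul hc
    (fun z => (hw.contDiff_V.differentiable_deriv_two z).hasDerivAt) ?_
  have := hw.tendsto_V_atTop.sub hw.tendsto_U_atTop
  rw [sub_zero] at this
  exact this.congr fun z => by linarith [hw.eq_V z]

theorem hasDerivAt_logDeriv_motilityWeighted (hw : IsTravellingWave a b m c U V) {z : ℝ}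
    (hz : motilityWeighted m U V z ≠ 0) :
    HasDerivAt (logDeriv (motilityWeighted m U V))
      (-(logDeriv (motilityWeighted m U V) z ^ 2
        + c * (1 + V z) ^ m * logDeriv (motilityWeighted m U V) z
        + (c * (deriv V z * m * (1 + V z) ^ (m - 1)) + (1 + V z) ^ m * (a - b * U z)))) z := by
  have hW := hw.contDiff_motilityWeighted
  have hW' := (hW.differentiable (by norm_num) z).hasDerivAt
  have hh : HasDerivAt (fun y => (1 + V y) ^ m) (deriv V z * m * (1 + V z) ^ (m - 1)) z :=
    ((hw.contDiff_V.differentiable (by norm_num) z).hasDerivAt.const_add 1).rpow_const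
      (.inl (hw.one_add_V_pos z).ne')
  have hU' : deriv U z = deriv V z * m * (1 + V z) ^ (m - 1) * motilityWeighted m U V z
      + (1 + V z) ^ m * deriv (motilityWeighted m U V) z :=
    ((hh.mul hW').congr_of_eventuallyEq (.of_forall hw.U_eq_mul_motilityWeighted)).deriv
  refine ((hW.differentiable_deriv_two z).hasDerivAt.div hW' hz).congr_deriv ?_
  have e := hw.eq_U z
  rw [hU', hw.U_eq_mul_motilityWeighted z] at e
  rw [logDeriv_apply, hw.U_eq_mul_motilityWeighted z]
  field_simp
  linear_combination (motilityWeighted m U V z) * e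

theorem false_of_subcritical (hw : IsTravellingWave a b m c U V) (ha : 0 < a) (hb : 0 < b)
    (hc₀ : 0 < c) (hc : c ^ 2 < 4 * a) : False := by
  have hV1 : Tendsto (fun z => 1 + V z) atTop (𝓝 1) := by
    simpa using tendsto_const_nhds.add hw.tendsto_V_atTop
  have hh : Tendsto (fun z => (1 + V z) ^ m) atTop (𝓝 1) := by
    simpa using hV1.rpow_const (.inl one_ne_zero)
  have hh' : Tendsto (fun z => deriv V z * m * (1 + V z) ^ (m - 1)) atTop (𝓝 0) := by
    simpa using ((hw.tendsto_deriv_V_atTop hc₀).mul_const m).mul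
      (hV1.rpow_const (.inl one_ne_zero))
  have hq : Tendsto (fun z => c * (deriv V z * m * (1 + V z) ^ (m - 1))
      + (1 + V z) ^ m * (a - b * U z)) atTop (𝓝 a) := by
    simpa using (hh'.const_mul c).add
      (hh.mul (tendsto_const_nhds.sub (hw.tendsto_U_atTop.const_mul b)))
  exact not_eventually_hasDerivAt_riccati (by simpa using hh.const_mul c) hq hc
    (.of_forall fun z => hw.hasDerivAt_logDeriv_motilityWeighted
      (hw.motilityWeighted_pos (hw.U_pos ha hb z)).ne')

end IsTravellingWave

theorem no_travelling_wave_subcritical_speed_general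
    (a b m c : ℝ) (ha : 0 < a) (hb : 0 < b)
    (hc : c < 2 * Real.sqrt a) :
    ¬ ∃ U V : ℝ → ℝ, ContDiff ℝ 2 U ∧ ContDiff ℝ 2 V ∧
      (∀ z, 0 ≤ U z) ∧ (∀ z, 0 ≤ V z) ∧
      (∀ z, deriv (deriv (fun y => (1 + V y) ^ (-m) * U y)) z
          + c * deriv U z + U z * (a - b * U z) = 0) ∧
      (∀ z, deriv (deriv V) z + c * deriv V z + U z - V z = 0) ∧
      Tendsto U atBot (nhds (a / b)) ∧ Tendsto V atBot (nhds (a / b)) ∧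
      Tendsto U atTop (nhds 0) ∧ Tendsto V atTop (nhds 0) := by
  rintro ⟨U, V, hU, hV, hU₀, hV₀, heqU, heqV, hUbot, hVbot, hUtop, hVtop⟩
  have hw : IsTravellingWave a b m c U V :=
    ⟨hU, hV, hU₀, hV₀, heqU, heqV, hUbot, hVbot, hUtop, hVtop⟩
  rcases le_or_gt c 0 with hc₀ | hc₀
  · exact hw.false_of_speed_nonpos ha hb hc₀
  · exact hw.false_of_subcritical ha hb hc₀ (by nlinarith [sq_sqrt ha.le, sqrt_nonneg a])

/-- no nonnegative travelling wave connecting `(a/b, a/b)` to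
`(0,0)` exists when the wave speed satisfies `c < 2√a`. -/
theorem no_travelling_wave_subcritical_speed
    (a b m c : ℝ) (ha : 0 < a) (hb : 0 < b) (hm : 0 < m)
    (hc : c < 2 * Real.sqrt a) :
    ¬ ∃ U V : ℝ → ℝ, ContDiff ℝ 2 U ∧ ContDiff ℝ 2 V ∧
      (∀ z, 0 ≤ U z) ∧ (∀ z, 0 ≤ V z) ∧
      (∀ z, deriv (deriv (fun y => (1 + V y) ^ (-m) * U y)) z
          + c * deriv U z + U z * (a - b * U z) = 0) ∧
      (∀ z, deriv (deriv V) z + c * deriv V z + U z - V z = 0) ∧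
      Tendsto U atBot (nhds (a / b)) ∧ Tendsto V atBot (nhds (a / b)) ∧
      Tendsto U atTop (nhds 0) ∧ Tendsto V atTop (nhds 0) :=
  no_travelling_wave_subcritical_speed_general a b m c ha hb hc
end

section
/- Let a, m > 0 and c ≥ 2√a, and set λ = (c − √(c² − 4a))/2, φ(x) = 1 + e^{−λx}/(1+a) and θ₁(x) = (c − √(c² − 4a·φ(x)^{−m}))/(2·φ(x)^{−m}). Then lim_{x→+∞} e^{(θ₁(x) − λ)·x} = 1. -/
/-!
Rationalising, `θ₁ = 2a / (c + √(c² - 4a s))` with `s = φ^{-m}`, and `λ` is the same expression at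
`s = 1`. Since `√·` is `1/2`-Hölder, `|θ₁ - λ| ≲ √(1 - s)`, and `1 - φ^{-m} ≤ m (φ - 1) ≲ e^{-λx}`.
Hence `|θ₁(x) - λ| ≲ e^{-λx/2}`, so `(θ₁(x) - λ) x → 0` even in the critical case `c = 2√a`.
-/

open Real Filter Topology Asymptotics

lemma sqrt_add_le_sqrt_add_sqrt {x y : ℝ} (hx : 0 ≤ x) (hy : 0 ≤ y) : √(x + y) ≤ √x + √y := by
  rw [sqrt_le_iff]
  refine ⟨by positivity, ?_⟩
  nlinarith [sq_sqrt hx, sq_sqrt hy, mul_nonneg (sqrt_nonneg x) (sqrt_nonneg y)]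

lemma one_sub_rpow_neg_le {y m : ℝ} (hy : 0 < y) (hm : 0 ≤ m) : 1 - y ^ (-m) ≤ m * (y - 1) := by
  have hexp : 1 + log y * -m ≤ y ^ (-m) := by
    rw [rpow_def_of_pos hy, add_comm]
    exact add_one_le_exp _
  nlinarith [log_le_sub_one_of_pos hy]

lemma sub_sqrt_div_eq_div_add_sqrt {a c s : ℝ} (hs : s ≠ 0) (hdisc : 0 ≤ c ^ 2 - 4 * a * s)
    (hpos : 0 < c + √(c ^ 2 - 4 * a * s)) :
    (c - √(c ^ 2 - 4 * a * s)) / (2 * s) = 2 * a / (c + √(c ^ 2 - 4 * a * s)) := by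
  rw [div_eq_div_iff (mul_ne_zero two_ne_zero hs) hpos.ne']
  linear_combination -sq_sqrt hdisc

lemma abs_div_add_sqrt_sub_le {a c s : ℝ} (ha : 0 ≤ a) (hc : 0 < c) (hac : 4 * a ≤ c ^ 2)
    (hs : s ≤ 1) :
    |2 * a / (c + √(c ^ 2 - 4 * a * s)) - 2 * a / (c + √(c ^ 2 - 4 * a))|
      ≤ 2 * a / c ^ 2 * √(4 * a * (1 - s)) := by
  set D₀ := √(c ^ 2 - 4 * a)
  set D := √(c ^ 2 - 4 * a * s)
  have hD₀D : D₀ ≤ D := sqrt_le_sqrt (by nlinarith)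
  have hDD₀ : D ≤ D₀ + √(4 * a * (1 - s)) := by
    have := sqrt_add_le_sqrt_add_sqrt (sub_nonneg.2 hac) (by nlinarith : 0 ≤ 4 * a * (1 - s))
    rwa [show c ^ 2 - 4 * a + 4 * a * (1 - s) = c ^ 2 - 4 * a * s by ring] at this
  have hD₀ : 0 ≤ D₀ := sqrt_nonneg _
  have hdiff : 2 * a / (c + D₀) - 2 * a / (c + D) = 2 * a * (D - D₀) / ((c + D₀) * (c + D)) := by
    rw [div_sub_div _ _ (by positivity) (by positivity)]
    ring
  rw [abs_sub_comm, hdiff, abs_of_nonneg (by apply div_nonneg <;> nlinarith)]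
  calc 2 * a * (D - D₀) / ((c + D₀) * (c + D)) ≤ 2 * a * (D - D₀) / c ^ 2 :=
        div_le_div_of_nonneg_left (by nlinarith) (by positivity) (by nlinarith)
    _ ≤ 2 * a / c ^ 2 * √(4 * a * (1 - s)) := by
        rw [mul_div_right_comm]
        gcongr
        linarith

lemma tendsto_exp_mul_of_isBigO_exp_neg {f : ℝ → ℝ} {b : ℝ} (hb : 0 < b)
    (hf : f =O[atTop] fun x => exp (-b * x)) :
    Tendsto (fun x => exp (f x * x)) atTop (𝓝 1) := by
  have hlim : Tendsto (fun x => exp (-b * x) * x) atTop (𝓝 0) := by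
    simpa [mul_comm] using tendsto_rpow_mul_exp_neg_mul_atTop_nhds_zero 1 b hb
  simpa using ((hf.mul (isBigO_refl _ _)).trans_tendsto hlim).rexp

/-- `e^{(θ₁(x) − λ)x} → 1` as `x → +∞`. -/
theorem exp_theta1_sub_lam_tendsto_one
    (a m c : ℝ) (ha : 0 < a) (hm : 0 < m) (hc : 2 * Real.sqrt a ≤ c)
    (lam : ℝ) (hlam : lam = (c - Real.sqrt (c ^ 2 - 4 * a)) / 2)
    (φ θ₁ : ℝ → ℝ)
    (hφ : ∀ x, φ x = 1 + Real.exp (-lam * x) / (1 + a))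
    (hθ₁ : ∀ x, θ₁ x = (c - Real.sqrt (c ^ 2 - 4 * a * (φ x) ^ (-m)))
        / (2 * (φ x) ^ (-m))) :
    Tendsto (fun x => Real.exp ((θ₁ x - lam) * x)) atTop (nhds 1) := by
  have hc₀ : 0 < c := (mul_pos two_pos (sqrt_pos.2 ha)).trans_le hc
  have hac : 4 * a ≤ c ^ 2 := by nlinarith [sq_sqrt ha.le, sqrt_nonneg a]
  have hroot (s : ℝ) (hs₀ : 0 < s) (hs₁ : s ≤ 1) :
      (c - √(c ^ 2 - 4 * a * s)) / (2 * s) = 2 * a / (c + √(c ^ 2 - 4 * a * s)) :=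
    sub_sqrt_div_eq_div_add_sqrt hs₀.ne' (by nlinarith) (by positivity)
  have hlam' : lam = 2 * a / (c + √(c ^ 2 - 4 * a)) := by
    simpa [hlam] using hroot 1 one_pos le_rfl
  have hlam₀ : 0 < lam := by rw [hlam']; positivity
  refine tendsto_exp_mul_of_isBigO_exp_neg (half_pos hlam₀) <|
    IsBigO.of_bound (2 * a / c ^ 2 * √(4 * a * m)) (Eventually.of_forall fun x => ?_)
  have hφ_sub : φ x - 1 ≤ exp (-lam * x) := by
    rw [hφ, add_sub_cancel_left]
    exact div_le_self (exp_pos _).le (by linarith)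
  have hφ₁ : 1 ≤ φ x := by rw [hφ]; exact le_add_of_nonneg_right (by positivity)
  set s := φ x ^ (-m)
  have hs₁ : s ≤ 1 := rpow_le_one_of_one_le_of_nonpos hφ₁ (by linarith)
  have h1s : 1 - s ≤ m * exp (-lam * x) :=
    (one_sub_rpow_neg_le (by linarith) hm.le).trans (by gcongr)
  rw [norm_eq_abs, norm_of_nonneg (exp_pos _).le]
  calc |θ₁ x - lam| = |2 * a / (c + √(c ^ 2 - 4 * a * s)) - 2 * a / (c + √(c ^ 2 - 4 * a))| := by
        rw [hθ₁, hroot s (rpow_pos_of_pos (by linarith) _) hs₁, ← hlam']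
    _ ≤ 2 * a / c ^ 2 * √(4 * a * (1 - s)) := abs_div_add_sqrt_sub_le ha.le hc₀ hac hs₁
    _ ≤ 2 * a / c ^ 2 * √(4 * a * (m * exp (-lam * x))) := by gcongr
    _ = 2 * a / c ^ 2 * √(4 * a * m) * exp (-(lam / 2) * x) := by
        rw [← mul_assoc, sqrt_mul (by positivity), ← exp_half]
        ring_nf
end

section
/- Let a, m > 0 and c = 2√a, so λ = (c − √(c² − 4a))/2 = √a, and set φ(x) = 1 + e^{−λx}/(1+a), θ₁(x) = (c − √(c² − 4a·φ(x)^{−m}))/(2·φ(x)^{−m}) and K₁ = (a/2)·√(m/(1+a)). Then there exists x₀ ∈ ℝ such that for all x > x₀: 0 < θ₁'(x) ≤ 2K₁·e^{−(λ/2)x} and −λK₁·e^{−(λ/2)x} ≤ θ₁''(x) < 0. -/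
/-!
Write `l = λ = √a`, `b = 1 + a`, `s = √(1 - φ^(-m))` and `ρ = s' / s`. At the critical speed the
root simplifies to `θ₁ = l / (1 + s)`, so `θ₁' = -l ρ s / (1 + s)²`. Differentiating `θ₁'`
logarithmically gives `θ₁'' = θ₁' Λ`, where `Λ` involves only `φ`, `s` and `ρ`; this avoids any
second-order expansion of `ρ`. Since `(1 - φ^(-m)) / (φ - 1) → m` as `φ → 1⁺`, one gets
`s ~ √(m / b) e^{-l x / 2}` and `ρ → -l / 2`, hence `Λ → -l / 2`. So `θ₁' / e^{-l x / 2} → K₁` and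
`θ₁'' / e^{-l x / 2} → -l K₁ / 2`, and both bounds hold as soon as these ratios lie in `(0, 2 K₁)`
and `(-l K₁, 0)`.
-/

open Real Filter Topology

theorem tendsto_rpow_sub_one_div_sub_one (p : ℝ) :
    Tendsto (fun t : ℝ => (t ^ p - 1) / (t - 1)) (𝓝[≠] 1) (𝓝 p) := by
  have h := hasDerivAt_iff_tendsto_slope.mp
    (hasDerivAt_rpow_const (x := 1) (p := p) (Or.inl one_ne_zero))
  rw [one_rpow, mul_one] at h
  refine h.congr fun t => ?_
  rw [slope_def_field, one_rpow]

theorem eventually_mul_lt_and_lt_mul_of_tendsto_div {α : Type*} {l : Filter α} {f g : α → ℝ}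
    {L p q : ℝ} (hg : ∀ᶠ x in l, 0 < g x) (h : Tendsto (fun x => f x / g x) l (𝓝 L))
    (hp : p < L) (hq : L < q) : ∀ᶠ x in l, p * g x < f x ∧ f x < q * g x := by
  filter_upwards [hg, h.eventually (Ioo_mem_nhds hp hq)] with x hgx hx
  exact ⟨(lt_div_iff₀ hgx).mp hx.1, (div_lt_iff₀ hgx).mp hx.2⟩

noncomputable section

namespace CriticalWave

theorem critical_speed_root {a u : ℝ} (ha : 0 ≤ a) (hu : 0 < u) (hu1 : u ≤ 1) :
    (2 * √a - √((2 * √a) ^ 2 - 4 * a * u)) / (2 * u) = √a / (1 + √(1 - u)) := by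
  have hs := sq_sqrt (sub_nonneg.2 hu1)
  have hdisc : (2 * √a) ^ 2 - 4 * a * u = (2 * √a * √(1 - u)) ^ 2 := by
    linear_combination (-4 * √a ^ 2) * hs + 4 * u * sq_sqrt ha
  rw [hdisc, sqrt_sq (by positivity)]
  have hs0 : 0 ≤ √(1 - u) := sqrt_nonneg _
  field_simp
  linear_combination (-√a) * hs

theorem critical_speed_decay_rate {a : ℝ} (ha : 0 ≤ a) :
    (2 * √a - √((2 * √a) ^ 2 - 4 * a)) / 2 = √a := by
  rw [mul_pow, sq_sqrt ha]; norm_num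

def phi (l b x : ℝ) : ℝ := 1 + exp (-l * x) / b

def gap (l b m x : ℝ) : ℝ := 1 - phi l b x ^ (-m)

def sqrtGap (l b m x : ℝ) : ℝ := √(gap l b m x)

def sqrtGapLogDeriv (l b m x : ℝ) : ℝ :=
  -(m * l / 2) * (phi l b x - 1) * phi l b x ^ (-m - 1) / gap l b m x

def theta (l b m x : ℝ) : ℝ := l / (1 + sqrtGap l b m x)

def thetaDeriv (l b m x : ℝ) : ℝ :=
  -l * sqrtGapLogDeriv l b m x * sqrtGap l b m x / (1 + sqrtGap l b m x) ^ 2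

def thetaDerivLogDeriv (l b m x : ℝ) : ℝ :=
  -l + (m + 1) * l * (phi l b x - 1) / phi l b x
    - sqrtGapLogDeriv l b m x * (1 + 2 * sqrtGap l b m x / (1 + sqrtGap l b m x))

variable (l : ℝ) {b m : ℝ}

section Positivity

variable (hb : 0 < b)
include hb

theorem one_lt_phi (x : ℝ) : 1 < phi l b x :=
  lt_add_of_pos_right 1 (div_pos (exp_pos _) hb)

theorem phi_pos (x : ℝ) : 0 < phi l b x := one_pos.trans (one_lt_phi l hb x)

variable (hm : 0 < m)
include hm

theorem gap_pos (x : ℝ) : 0 < gap l b m x :=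
  sub_pos.2 (rpow_lt_one_of_one_lt_of_neg (one_lt_phi l hb x) (neg_lt_zero.2 hm))

theorem sqrtGap_pos (x : ℝ) : 0 < sqrtGap l b m x := sqrt_pos.2 (gap_pos l hb hm x)

theorem sq_sqrtGap (x : ℝ) : sqrtGap l b m x ^ 2 = gap l b m x := sq_sqrt (gap_pos l hb hm x).le

end Positivity

theorem hasDerivAt_phi (b x : ℝ) : HasDerivAt (phi l b) (-l * (phi l b x - 1)) x := by
  refine ((((hasDerivAt_id x).const_mul (-l)).exp.div_const b).const_add 1).congr_deriv ?_
  simp only [phi, id]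
  ring

section Derivatives

variable (hb : 0 < b) (hm : 0 < m)
include hb hm

theorem hasDerivAt_gap (x : ℝ) :
    HasDerivAt (gap l b m) (2 * sqrtGapLogDeriv l b m x * gap l b m x) x := by
  have hpow := (hasDerivAt_phi l b x).rpow_const (p := -m) (Or.inl (phi_pos l hb x).ne')
  refine (hpow.const_sub 1).congr_deriv ?_
  simp only [sqrtGapLogDeriv]
  field_simp [(gap_pos l hb hm x).ne']

theorem hasDerivAt_sqrtGap (x : ℝ) :
    HasDerivAt (sqrtGap l b m) (sqrtGapLogDeriv l b m x * sqrtGap l b m x) x := by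
  refine ((hasDerivAt_gap l hb hm x).sqrt (gap_pos l hb hm x).ne').congr_deriv ?_
  rw [← sqrtGap, ← sq_sqrtGap l hb hm x]
  field_simp [(sqrtGap_pos l hb hm x).ne']

theorem hasDerivAt_sqrtGapLogDeriv (x : ℝ) :
    HasDerivAt (sqrtGapLogDeriv l b m) (sqrtGapLogDeriv l b m x *
      (-l + (m + 1) * l * (phi l b x - 1) / phi l b x - 2 * sqrtGapLogDeriv l b m x)) x := by
  have hφ := (phi_pos l hb x).ne'
  refine (((((hasDerivAt_phi l b x).sub_const 1).const_mul (-(m * l / 2))).mul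
    ((hasDerivAt_phi l b x).rpow_const (p := -m - 1) (Or.inl hφ))).div
    (hasDerivAt_gap l hb hm x) (gap_pos l hb hm x).ne').congr_deriv ?_
  rw [rpow_sub_one hφ (-m - 1)]
  simp only [Pi.mul_apply, sqrtGapLogDeriv]
  field_simp [(gap_pos l hb hm x).ne']
  ring

theorem hasDerivAt_theta (x : ℝ) : HasDerivAt (theta l b m) (thetaDeriv l b m x) x := by
  have hs := hasDerivAt_sqrtGap l hb hm x
  refine ((hasDerivAt_const x l).div (hs.const_add 1)
    (by linarith [sqrtGap_pos l hb hm x])).congr_deriv ?_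
  simp only [thetaDeriv]; ring

theorem hasDerivAt_thetaDeriv (x : ℝ) :
    HasDerivAt (thetaDeriv l b m) (thetaDeriv l b m x * thetaDerivLogDeriv l b m x) x := by
  have hs := hasDerivAt_sqrtGap l hb hm x
  have hs1 : 1 + sqrtGap l b m x ≠ 0 := by linarith [sqrtGap_pos l hb hm x]
  refine ((((hasDerivAt_sqrtGapLogDeriv l hb hm x).const_mul (-l)).mul hs).div
    ((hs.const_add 1).pow 2) (pow_ne_zero 2 hs1)).congr_deriv ?_
  simp only [Pi.mul_apply, Pi.pow_apply, thetaDeriv, thetaDerivLogDeriv]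
  field_simp [(phi_pos l hb x).ne']
  ring

end Derivatives

section Asymptotics

variable {l} (hl : 0 < l) (hb : 0 < b) (hm : 0 < m)
include hl hb

theorem tendsto_phi : Tendsto (phi l b) atTop (𝓝[>] 1) := by
  refine tendsto_nhdsWithin_of_tendsto_nhds_of_eventually_within _ ?_
    (Eventually.of_forall (one_lt_phi l hb))
  have h := ((tendsto_exp_atBot.comp
    (tendsto_id.const_mul_atTop_of_neg (neg_neg_of_pos hl))).div_const b).const_add 1
  rw [zero_div, add_zero] at h
  exact h

theorem tendsto_gap_div_phi_sub_one :
    Tendsto (fun x => gap l b m x / (phi l b x - 1)) atTop (𝓝 m) := by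
  have h := ((tendsto_rpow_sub_one_div_sub_one (-m)).comp
    ((tendsto_phi hl hb).mono_right (nhdsWithin_mono _ fun t ht => ne_of_gt ht))).neg
  rw [neg_neg] at h
  refine h.congr fun x => ?_
  simp only [Function.comp, gap, ← neg_div, neg_sub]

theorem tendsto_sqrtGap : Tendsto (sqrtGap l b m) atTop (𝓝 0) := by
  have h := ((tendsto_gap_div_phi_sub_one (m := m) hl hb).mul
    (((tendsto_phi hl hb).mono_right nhdsWithin_le_nhds).sub_const 1)).sqrt
  rw [sub_self, mul_zero, sqrt_zero] at h
  refine h.congr fun x => ?_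
  rw [div_mul_cancel₀ _ (sub_pos.2 (one_lt_phi l hb x)).ne', sqrtGap]

theorem tendsto_sqrtGap_div_exp :
    Tendsto (fun x => sqrtGap l b m x / exp (-(l / 2) * x)) atTop (𝓝 √(m / b)) := by
  refine ((tendsto_gap_div_phi_sub_one hl hb).div_const b).sqrt.congr fun x => ?_
  have hexp : phi l b x - 1 = exp (-(l / 2) * x) ^ 2 / b := by
    rw [phi, ← exp_nat_mul]; push_cast; ring_nf
  rw [hexp, div_div, div_mul_cancel₀ _ hb.ne', sqrt_div' _ (sq_nonneg _),
    sqrt_sq (exp_pos _).le, sqrtGap]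

include hm

theorem tendsto_sqrtGapLogDeriv : Tendsto (sqrtGapLogDeriv l b m) atTop (𝓝 (-(l / 2))) := by
  have hpow := ((tendsto_phi hl hb).mono_right nhdsWithin_le_nhds).rpow_const
    (p := -m - 1) (Or.inl one_ne_zero)
  rw [one_rpow] at hpow
  have h := (hpow.const_mul (-(m * l / 2))).div (tendsto_gap_div_phi_sub_one hl hb) hm.ne'
  rw [show -(m * l / 2) * 1 / m = -(l / 2) by field_simp] at h
  refine h.congr fun x => ?_
  rw [Pi.div_apply, sqrtGapLogDeriv, div_div_eq_mul_div]
  ring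

theorem tendsto_thetaDerivLogDeriv :
    Tendsto (thetaDerivLogDeriv l b m) atTop (𝓝 (-(l / 2))) := by
  have hφ := (tendsto_phi hl hb).mono_right nhdsWithin_le_nhds
  have hs := tendsto_sqrtGap (m := m) hl hb
  have h := ((tendsto_const_nhds (x := -l)).add
    (((hφ.sub_const 1).const_mul ((m + 1) * l)).div hφ one_ne_zero)).sub
    ((tendsto_sqrtGapLogDeriv hl hb hm).mul ((tendsto_const_nhds (x := 1)).add
      ((hs.const_mul 2).div (hs.const_add 1) (by norm_num))))
  rw [show -l + (m + 1) * l * (1 - 1) / 1 - -(l / 2) * (1 + 2 * 0 / (1 + 0)) = -(l / 2) by ring]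
    at h
  refine h.congr fun x => ?_
  simp only [Pi.div_apply, thetaDerivLogDeriv]

theorem tendsto_thetaDeriv_div_exp :
    Tendsto (fun x => thetaDeriv l b m x / exp (-(l / 2) * x)) atTop
      (𝓝 (l ^ 2 / 2 * √(m / b))) := by
  have h := (((tendsto_sqrtGapLogDeriv hl hb hm).const_mul (-l)).mul
    (tendsto_sqrtGap_div_exp (m := m) hl hb)).div
    (((tendsto_sqrtGap (m := m) hl hb).const_add 1).pow 2) (by norm_num)
  rw [show -l * -(l / 2) * √(m / b) / (1 + 0) ^ 2 = l ^ 2 / 2 * √(m / b) by ring] at h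
  refine h.congr fun x => ?_
  simp only [Pi.div_apply, thetaDeriv]
  ring

theorem tendsto_thetaDeriv_mul_thetaDerivLogDeriv_div_exp :
    Tendsto (fun x => thetaDeriv l b m x * thetaDerivLogDeriv l b m x / exp (-(l / 2) * x))
      atTop (𝓝 (l ^ 2 / 2 * √(m / b) * (-(l / 2)))) := by
  refine ((tendsto_thetaDeriv_div_exp hl hb hm).mul
    (tendsto_thetaDerivLogDeriv hl hb hm)).congr fun x => ?_
  ring

end Asymptotics

end CriticalWave

end

open CriticalWave

/-- derivative bounds on `θ₁` for the critical speed `c = 2√a`. -/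
theorem theta1_derivative_bounds_critical
    (a m c : ℝ) (ha : 0 < a) (hm : 0 < m) (hc : c = 2 * Real.sqrt a)
    (lam : ℝ) (hlam : lam = (c - Real.sqrt (c ^ 2 - 4 * a)) / 2)
    (φ θ₁ : ℝ → ℝ)
    (hφ : ∀ x, φ x = 1 + Real.exp (-lam * x) / (1 + a))
    (hθ₁ : ∀ x, θ₁ x = (c - Real.sqrt (c ^ 2 - 4 * a * (φ x) ^ (-m)))
        / (2 * (φ x) ^ (-m)))
    (K₁ : ℝ) (hK₁ : K₁ = (a / 2) * Real.sqrt (m / (1 + a))) :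
    ∃ x₀ : ℝ, ∀ x > x₀,
      (0 < deriv θ₁ x ∧ deriv θ₁ x ≤ 2 * K₁ * Real.exp (-(lam / 2) * x)) ∧
      (-(lam * K₁) * Real.exp (-(lam / 2) * x) ≤ deriv (deriv θ₁) x ∧
        deriv (deriv θ₁) x < 0) := by
  subst hc
  obtain rfl : lam = √a := by rw [hlam, critical_speed_decay_rate ha.le]
  have hl : 0 < √a := sqrt_pos.2 ha
  have hb : 0 < 1 + a := by linarith
  have hφ' : φ = phi √a (1 + a) := funext hφ
  have hθ : θ₁ = theta √a (1 + a) m := funext fun x => by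
    rw [hθ₁, hφ', critical_speed_root ha.le (rpow_pos_of_pos (phi_pos _ hb x) _)
      (sub_pos.1 (gap_pos _ hb hm x)).le]
    rfl
  have hd1 : deriv θ₁ = thetaDeriv √a (1 + a) m :=
    hθ ▸ funext fun x => (hasDerivAt_theta _ hb hm x).deriv
  have hd2 : deriv (deriv θ₁) = fun x =>
      thetaDeriv √a (1 + a) m x * thetaDerivLogDeriv √a (1 + a) m x := by
    rw [hd1]; exact funext fun x => (hasDerivAt_thetaDeriv _ hb hm x).deriv
  have hK : √a ^ 2 / 2 * √(m / (1 + a)) = K₁ := by rw [hK₁, sq_sqrt ha.le]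
  have hKpos : 0 < K₁ := hK ▸ by positivity
  have hexp : ∀ᶠ x in atTop, 0 < exp (-(√a / 2) * x) := Eventually.of_forall fun _ => exp_pos _
  have h1 := eventually_mul_lt_and_lt_mul_of_tendsto_div hexp
    (hK ▸ tendsto_thetaDeriv_div_exp hl hb hm) hKpos (by linarith : K₁ < 2 * K₁)
  have h2 := eventually_mul_lt_and_lt_mul_of_tendsto_div hexp
    (hK ▸ tendsto_thetaDeriv_mul_thetaDerivLogDeriv_div_exp hl hb hm)
    (by nlinarith : -(√a * K₁) < K₁ * -(√a / 2)) (by nlinarith : K₁ * -(√a / 2) < 0)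
  obtain ⟨x₀, hx₀⟩ := eventually_atTop.1 (h1.and h2)
  refine ⟨x₀, fun x hx => ?_⟩
  obtain ⟨⟨hpos, hupper⟩, hlower, hneg⟩ := hx₀ x hx.le
  rw [hd2, hd1]
  exact ⟨⟨by simpa using hpos, hupper.le⟩, hlower.le, by simpa using hneg⟩
end

section
/- Let a > 0, c ≥ 2√a, λ = (c − √(c² − 4a))/2, and let η > 0 be a real number. Let u : ℝ → ℝ be continuous with 0 ≤ u(x) ≤ min{e^{−λx}, η} for all x ∈ ℝ, and define V(x;u) = (λ₂ − λ₁)^{−1}·(∫_{−∞}^x e^{λ₁(x−s)} u(s) ds + ∫_x^{+∞} e^{λ₂(x−s)} u(s) ds). Then V(·;u) is twice continuously differentiable, solves V'' + cV' + u − V = 0 on ℝ, and satisfies 0 ≤ V(x;u) ≤ min{e^{−λx}/(1+a), η} for all x ∈ ℝ; moreover if u(x) > 0 for all x then V(x;u) > 0 for all x. -/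
/-!
Factoring `e^{μ(x-s)} = e^{μx} e^{-μs}` turns each half-line integral into `e^{μx}` times a
primitive, so `L = ∫_{-∞}^x e^{λ₁(x-s)} u` and `R = ∫_x^∞ e^{λ₂(x-s)} u` satisfy
`L' = λ₁ L + u` and `R' = λ₂ R - u`. Hence `V' = (λ₂ - λ₁)⁻¹ (λ₁ L + λ₂ R)`, and
`V'' + cV' - V = -u` because `λ₁, λ₂` are the roots of `μ² + cμ - 1`.

For the bounds, `V` is monotone in `u ≥ 0`, and against `u = C e^{-λs}` with `λ₁ + λ < 0 < λ₂ + λ`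
the integrals are explicit: `V ≤ C e^{-λx} / (1 + cλ - λ²)`. Taking the given `λ`, a root of
`μ² - cμ + a`, gives the factor `1 + a`; taking `λ = 0`, `C = η` gives `V ≤ η`.
-/

open Real Filter MeasureTheory Set

section HalfLineIntegral

variable {E : Type*} [NormedAddCommGroup E] [NormedSpace ℝ E] [CompleteSpace E] {f : ℝ → E}

theorem hasDerivAt_setIntegral_Iic (hf : Continuous f) (hint : ∀ y, IntegrableOn f (Iic y))
    (x : ℝ) : HasDerivAt (fun y => ∫ s in Iic y, f s) (f x) x := by
  have hsplit : (fun y => ∫ s in Iic y, f s) =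
      fun y => (∫ s in Iic 0, f s) + ∫ s in (0 : ℝ)..y, f s := by
    funext y
    rw [← intervalIntegral.integral_Iic_sub_Iic (hint 0) (hint y)]
    abel
  rw [hsplit]
  exact (intervalIntegral.integral_hasDerivAt_right (hf.intervalIntegrable 0 x)
    (hf.stronglyMeasurableAtFilter _ _) hf.continuousAt).const_add _

theorem hasDerivAt_setIntegral_Ici (hf : Continuous f) (hint : ∀ y, IntegrableOn f (Ici y))
    (x : ℝ) : HasDerivAt (fun y => ∫ s in Ici y, f s) (-f x) x := by
  have hsplit : (fun y => ∫ s in Ici y, f s) =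
      fun y => (∫ s in Ici 0, f s) - ∫ s in (0 : ℝ)..y, f s := by
    funext y
    rw [← intervalIntegral.integral_Ici_sub_Ici' (hint 0) (hint y)]
    abel
  rw [hsplit]
  exact (intervalIntegral.integral_hasDerivAt_right (hf.intervalIntegrable 0 x)
    (hf.stronglyMeasurableAtFilter _ _) hf.continuousAt).const_sub _

end HalfLineIntegral

theorem contDiff_one_of_hasDerivAt {f f' : ℝ → ℝ} (hf : ∀ x, HasDerivAt f (f' x) x)
    (hf' : Continuous f') : ContDiff ℝ 1 f :=
  contDiff_one_iff_deriv.2 ⟨fun x => (hf x).differentiableAt, by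
    rwa [show deriv f = f' from funext fun x => (hf x).deriv]⟩

section ExpConv

variable {μ lam C M : ℝ} {u : ℝ → ℝ}

noncomputable def expConvIic (μ : ℝ) (u : ℝ → ℝ) (x : ℝ) : ℝ :=
  ∫ s in Iic x, exp (μ * (x - s)) * u s

noncomputable def expConvIci (μ : ℝ) (u : ℝ → ℝ) (x : ℝ) : ℝ :=
  ∫ s in Ici x, exp (μ * (x - s)) * u s

theorem exp_mul_sub_mul (μ x s v : ℝ) :
    exp (μ * (x - s)) * v = exp (μ * x) * (exp (-μ * s) * v) := by
  rw [← mul_assoc, ← exp_add]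
  ring_nf

theorem expConvIic_eq (μ : ℝ) (u : ℝ → ℝ) (x : ℝ) :
    expConvIic μ u x = exp (μ * x) * ∫ s in Iic x, exp (-μ * s) * u s := by
  rw [expConvIic, ← integral_const_mul]
  exact integral_congr_ae (ae_of_all _ fun s => exp_mul_sub_mul μ x s (u s))

theorem expConvIci_eq (μ : ℝ) (u : ℝ → ℝ) (x : ℝ) :
    expConvIci μ u x = exp (μ * x) * ∫ s in Ici x, exp (-μ * s) * u s := by
  rw [expConvIci, ← integral_const_mul]
  exact integral_congr_ae (ae_of_all _ fun s => exp_mul_sub_mul μ x s (u s))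

theorem integrableOn_Iic_exp_mul_mul {b : ℝ} (hb : 0 < b) (hu : AEStronglyMeasurable u)
    (hM : ∀ s, ‖u s‖ ≤ M) (x : ℝ) : IntegrableOn (fun s => exp (b * s) * u s) (Iic x) :=
  (integrableOn_exp_mul_Iic hb x).mul_bdd hu.restrict (ae_of_all _ hM)

theorem integrableOn_Ici_exp_mul_mul {b : ℝ} (hb : b < 0) (hu : AEStronglyMeasurable u)
    (hM : ∀ s, ‖u s‖ ≤ M) (x : ℝ) : IntegrableOn (fun s => exp (b * s) * u s) (Ici x) :=
  ((integrableOn_Ici_iff_integrableOn_Ioi).2 (integrableOn_exp_mul_Ioi hb x)).mul_bdd hu.restrict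
    (ae_of_all _ hM)

theorem hasDerivAt_exp_mul_mul {F : ℝ → ℝ} {F' x : ℝ} (hF : HasDerivAt F F' x) :
    HasDerivAt (fun y => exp (μ * y) * F y) (μ * (exp (μ * x) * F x) + exp (μ * x) * F') x := by
  refine (((hasDerivAt_id' x).const_mul μ).exp.mul hF).congr_deriv ?_
  ring

theorem hasDerivAt_expConvIic (hμ : μ < 0) (hu : Continuous u) (hM : ∀ s, ‖u s‖ ≤ M)
    (x : ℝ) : HasDerivAt (expConvIic μ u) (μ * expConvIic μ u x + u x) x := by
  have hI := hasDerivAt_setIntegral_Iic (by fun_prop)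
    (integrableOn_Iic_exp_mul_mul (neg_pos.2 hμ) hu.aestronglyMeasurable hM) x
  rw [funext (expConvIic_eq μ u)]
  convert hasDerivAt_exp_mul_mul hI using 1
  beta_reduce
  rw [← exp_mul_sub_mul, sub_self, mul_zero, exp_zero, one_mul]

theorem hasDerivAt_expConvIci (hμ : 0 < μ) (hu : Continuous u) (hM : ∀ s, ‖u s‖ ≤ M)
    (x : ℝ) : HasDerivAt (expConvIci μ u) (μ * expConvIci μ u x - u x) x := by
  have hI := hasDerivAt_setIntegral_Ici (by fun_prop)
    (integrableOn_Ici_exp_mul_mul (neg_neg_of_pos hμ) hu.aestronglyMeasurable hM) x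
  rw [funext (expConvIci_eq μ u)]
  convert hasDerivAt_exp_mul_mul hI using 1
  beta_reduce
  rw [mul_neg, ← exp_mul_sub_mul, sub_self, mul_zero, exp_zero, one_mul, sub_eq_add_neg]

theorem expConvIic_nonneg (hu0 : ∀ s, 0 ≤ u s) (x : ℝ) : 0 ≤ expConvIic μ u x :=
  integral_nonneg fun s => mul_nonneg (exp_pos _).le (hu0 s)

theorem expConvIci_nonneg (hu0 : ∀ s, 0 ≤ u s) (x : ℝ) : 0 ≤ expConvIci μ u x :=
  integral_nonneg fun s => mul_nonneg (exp_pos _).le (hu0 s)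

theorem expConvIic_pos (hμ : μ < 0) (hu : Continuous u) (hM : ∀ s, ‖u s‖ ≤ M)
    (hpos : ∀ s, 0 < u s) (x : ℝ) : 0 < expConvIic μ u x := by
  have hpos' : ∀ s, 0 < exp (-μ * s) * u s := fun s => mul_pos (exp_pos _) (hpos s)
  rw [expConvIic_eq]
  refine mul_pos (exp_pos _) ?_
  rw [setIntegral_pos_iff_support_of_nonneg_ae (ae_of_all _ fun s => (hpos' s).le)
    (integrableOn_Iic_exp_mul_mul (neg_pos.2 hμ) hu.aestronglyMeasurable hM x),
    eq_univ_of_forall fun s => Function.mem_support.2 (hpos' s).ne', univ_inter]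
  simp

theorem exp_mul_mul_le_of_le_exp (hle : ∀ s, u s ≤ C * exp (-lam * s)) (s : ℝ) :
    exp (-μ * s) * u s ≤ C * exp (-(μ + lam) * s) :=
  calc exp (-μ * s) * u s ≤ exp (-μ * s) * (C * exp (-lam * s)) := by gcongr; exact hle s
    _ = C * exp (-(μ + lam) * s) := by rw [mul_left_comm, ← exp_add]; ring_nf

theorem exp_mul_mul_exp_neg_add_mul (μ lam x : ℝ) :
    exp (μ * x) * exp (-(μ + lam) * x) = exp (-lam * x) := by
  rw [← exp_add]
  ring_nf

theorem expConvIic_le_of_le_exp (h : μ + lam < 0) (hu0 : ∀ s, 0 ≤ u s)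
    (hle : ∀ s, u s ≤ C * exp (-lam * s)) (x : ℝ) :
    expConvIic μ u x ≤ C * exp (-lam * x) / -(μ + lam) := by
  have hb : 0 < -(μ + lam) := neg_pos.2 h
  calc expConvIic μ u x = exp (μ * x) * ∫ s in Iic x, exp (-μ * s) * u s :=
        expConvIic_eq μ u x
    _ ≤ exp (μ * x) * ∫ s in Iic x, C * exp (-(μ + lam) * s) := by
      gcongr exp (μ * x) * ?_
      exact integral_mono_of_nonneg (ae_of_all _ fun s => mul_nonneg (exp_pos _).le (hu0 s))
        ((integrableOn_exp_mul_Iic hb x).const_mul C)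
        (ae_of_all _ (exp_mul_mul_le_of_le_exp hle))
    _ = C * exp (-lam * x) / -(μ + lam) := by
      rw [integral_const_mul, integral_exp_mul_Iic hb, ← exp_mul_mul_exp_neg_add_mul μ lam x]
      ring

theorem expConvIci_le_of_le_exp (h : 0 < μ + lam) (hu0 : ∀ s, 0 ≤ u s)
    (hle : ∀ s, u s ≤ C * exp (-lam * s)) (x : ℝ) :
    expConvIci μ u x ≤ C * exp (-lam * x) / (μ + lam) := by
  have hb : -(μ + lam) < 0 := neg_neg_of_pos h
  calc expConvIci μ u x = exp (μ * x) * ∫ s in Ici x, exp (-μ * s) * u s :=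
        expConvIci_eq μ u x
    _ ≤ exp (μ * x) * ∫ s in Ici x, C * exp (-(μ + lam) * s) := by
      gcongr exp (μ * x) * ?_
      exact integral_mono_of_nonneg (ae_of_all _ fun s => mul_nonneg (exp_pos _).le (hu0 s))
        (((integrableOn_Ici_iff_integrableOn_Ioi).2 (integrableOn_exp_mul_Ioi hb x)).const_mul C)
        (ae_of_all _ (exp_mul_mul_le_of_le_exp hle))
    _ = C * exp (-lam * x) / (μ + lam) := by
      rw [integral_const_mul, integral_Ici_eq_integral_Ioi, integral_exp_mul_Ioi hb,
        neg_div_neg_eq, ← exp_mul_mul_exp_neg_add_mul μ lam x]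
      ring

end ExpConv

section Green

variable {c lam₁ lam₂ lam C M : ℝ} {u : ℝ → ℝ}

noncomputable def greenConv (lam₁ lam₂ : ℝ) (u : ℝ → ℝ) (x : ℝ) : ℝ :=
  (lam₂ - lam₁)⁻¹ * (expConvIic lam₁ u x + expConvIci lam₂ u x)

theorem hasDerivAt_greenConv (h₁ : lam₁ < 0) (h₂ : 0 < lam₂) (hu : Continuous u)
    (hM : ∀ s, ‖u s‖ ≤ M) (x : ℝ) :
    HasDerivAt (greenConv lam₁ lam₂ u) ((lam₂ - lam₁)⁻¹ *
      (lam₁ * expConvIic lam₁ u x + lam₂ * expConvIci lam₂ u x)) x := by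
  refine (((hasDerivAt_expConvIic h₁ hu hM x).add
    (hasDerivAt_expConvIci h₂ hu hM x)).const_mul _).congr_deriv ?_
  ring

theorem deriv_greenConv (h₁ : lam₁ < 0) (h₂ : 0 < lam₂) (hu : Continuous u)
    (hM : ∀ s, ‖u s‖ ≤ M) :
    deriv (greenConv lam₁ lam₂ u) = fun x =>
      (lam₂ - lam₁)⁻¹ * (lam₁ * expConvIic lam₁ u x + lam₂ * expConvIci lam₂ u x) :=
  funext fun x => (hasDerivAt_greenConv h₁ h₂ hu hM x).deriv

theorem hasDerivAt_deriv_greenConv (h₁ : lam₁ < 0) (h₂ : 0 < lam₂) (hu : Continuous u)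
    (hM : ∀ s, ‖u s‖ ≤ M) (x : ℝ) :
    HasDerivAt (deriv (greenConv lam₁ lam₂ u))
      ((lam₂ - lam₁)⁻¹ * (lam₁ * (lam₁ * expConvIic lam₁ u x + u x)
        + lam₂ * (lam₂ * expConvIci lam₂ u x - u x))) x := by
  rw [deriv_greenConv h₁ h₂ hu hM]
  exact (((hasDerivAt_expConvIic h₁ hu hM x).const_mul lam₁).add
    ((hasDerivAt_expConvIci h₂ hu hM x).const_mul lam₂)).const_mul _

theorem contDiff_two_greenConv (h₁ : lam₁ < 0) (h₂ : 0 < lam₂) (hu : Continuous u)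
    (hM : ∀ s, ‖u s‖ ≤ M) : ContDiff ℝ 2 (greenConv lam₁ lam₂ u) := by
  have hL : Continuous (expConvIic lam₁ u) := continuous_iff_continuousAt.2 fun x =>
    (hasDerivAt_expConvIic h₁ hu hM x).continuousAt
  have hR : Continuous (expConvIci lam₂ u) := continuous_iff_continuousAt.2 fun x =>
    (hasDerivAt_expConvIci h₂ hu hM x).continuousAt
  rw [show (2 : WithTop ℕ∞) = 1 + 1 from rfl]
  refine contDiff_succ_iff_deriv.2
    ⟨fun x => (hasDerivAt_greenConv h₁ h₂ hu hM x).differentiableAt, by simp, ?_⟩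
  exact contDiff_one_of_hasDerivAt (hasDerivAt_deriv_greenConv h₁ h₂ hu hM) (by fun_prop)

theorem greenConv_ode (h₁ : lam₁ < 0) (h₂ : 0 < lam₂) (hsum : lam₁ + lam₂ = -c)
    (hprod : lam₁ * lam₂ = -1) (hu : Continuous u) (hM : ∀ s, ‖u s‖ ≤ M) (x : ℝ) :
    deriv (deriv (greenConv lam₁ lam₂ u)) x + c * deriv (greenConv lam₁ lam₂ u) x + u x
      - greenConv lam₁ lam₂ u x = 0 := by
  rw [(hasDerivAt_deriv_greenConv h₁ h₂ hu hM x).deriv, deriv_greenConv h₁ h₂ hu hM,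
    greenConv]
  have hk : (lam₂ - lam₁)⁻¹ * (lam₂ - lam₁) = 1 := inv_mul_cancel₀ (by linarith)
  linear_combination (lam₂ - lam₁)⁻¹ * (lam₁ * expConvIic lam₁ u x
    + lam₂ * expConvIci lam₂ u x) * hsum
    - (lam₂ - lam₁)⁻¹ * (expConvIic lam₁ u x + expConvIci lam₂ u x) * hprod - u x * hk

theorem greenConv_nonneg (h : lam₁ ≤ lam₂) (hu0 : ∀ s, 0 ≤ u s) (x : ℝ) :
    0 ≤ greenConv lam₁ lam₂ u x :=
  mul_nonneg (inv_nonneg.2 (sub_nonneg.2 h))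
    (add_nonneg (expConvIic_nonneg hu0 x) (expConvIci_nonneg hu0 x))

theorem greenConv_pos (h₁ : lam₁ < 0) (h₂ : 0 < lam₂) (hu : Continuous u)
    (hM : ∀ s, ‖u s‖ ≤ M) (hpos : ∀ s, 0 < u s) (x : ℝ) :
    0 < greenConv lam₁ lam₂ u x :=
  mul_pos (inv_pos.2 (sub_pos.2 (h₁.trans h₂)))
    (add_pos_of_pos_of_nonneg (expConvIic_pos h₁ hu hM hpos x)
      (expConvIci_nonneg (fun s => (hpos s).le) x))

theorem greenConv_le_of_le_exp (h₁ : lam₁ + lam < 0) (h₂ : 0 < lam₂ + lam)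
    (hsum : lam₁ + lam₂ = -c) (hprod : lam₁ * lam₂ = -1) (hu0 : ∀ s, 0 ≤ u s)
    (hle : ∀ s, u s ≤ C * exp (-lam * s)) (x : ℝ) :
    greenConv lam₁ lam₂ u x ≤ C * exp (-lam * x) / (1 + c * lam - lam ^ 2) := by
  have hk : 0 < lam₂ - lam₁ := by linarith
  have hchar : 1 + c * lam - lam ^ 2 = -(lam₁ + lam) * (lam₂ + lam) := by
    linear_combination lam * hsum + hprod
  calc greenConv lam₁ lam₂ u x
      ≤ (lam₂ - lam₁)⁻¹ *
          (C * exp (-lam * x) / -(lam₁ + lam) + C * exp (-lam * x) / (lam₂ + lam)) :=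
        mul_le_mul_of_nonneg_left (add_le_add (expConvIic_le_of_le_exp h₁ hu0 hle x)
          (expConvIci_le_of_le_exp h₂ hu0 hle x)) (inv_nonneg.2 hk.le)
    _ = C * exp (-lam * x) / (1 + c * lam - lam ^ 2) := by
      rw [hchar]
      field_simp [h₁.ne, h₂.ne', hk.ne']
      ring

end Green

theorem roots_sq_add_mul_sub_one {c lam₁ lam₂ : ℝ}
    (hlam₁ : lam₁ = (-c - √(c ^ 2 + 4)) / 2) (hlam₂ : lam₂ = (-c + √(c ^ 2 + 4)) / 2) :
    lam₁ < 0 ∧ 0 < lam₂ ∧ lam₁ + lam₂ = -c ∧ lam₁ * lam₂ = -1 := by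
  have hs : √(c ^ 2 + 4) ^ 2 = c ^ 2 + 4 := sq_sqrt (by positivity)
  have habs : |c| < √(c ^ 2 + 4) := by
    rw [← sqrt_sq_eq_abs]
    exact sqrt_lt_sqrt (sq_nonneg c) (by linarith)
  subst hlam₁ hlam₂
  refine ⟨by linarith [le_abs_self (-c), abs_neg c], by linarith [le_abs_self c], by ring, ?_⟩
  linear_combination -hs / 4

theorem root_sq_sub_mul_add {a c lam : ℝ} (ha : 0 < a) (hc : 2 * √a ≤ c)
    (hlam : lam = (c - √(c ^ 2 - 4 * a)) / 2) :
    0 ≤ lam ∧ lam ≤ c ∧ lam ^ 2 - c * lam + a = 0 := by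
  have hc0 : 0 ≤ c := (by positivity : 0 ≤ 2 * √a).trans hc
  have hdisc : 0 ≤ c ^ 2 - 4 * a := by nlinarith [sq_sqrt ha.le, sqrt_nonneg a]
  have hs : √(c ^ 2 - 4 * a) ^ 2 = c ^ 2 - 4 * a := sq_sqrt hdisc
  have hsc : √(c ^ 2 - 4 * a) ≤ c := (sqrt_le_left hc0).2 (by linarith)
  subst hlam
  refine ⟨by linarith, by linarith [sqrt_nonneg (c ^ 2 - 4 * a)], ?_⟩
  linear_combination hs / 4

theorem V_solves_and_bounds_general
    (a c : ℝ) (ha : 0 < a) (hc : 2 * Real.sqrt a ≤ c)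
    (lam lam₁ lam₂ : ℝ)
    (hlam : lam = (c - Real.sqrt (c ^ 2 - 4 * a)) / 2)
    (hlam₁ : lam₁ = (-c - Real.sqrt (c ^ 2 + 4)) / 2)
    (hlam₂ : lam₂ = (-c + Real.sqrt (c ^ 2 + 4)) / 2)
    (η : ℝ)
    (u : ℝ → ℝ) (hu : Continuous u)
    (hubd : ∀ x, 0 ≤ u x ∧ u x ≤ min (Real.exp (-lam * x)) η)
    (V : ℝ → ℝ)
    (hV : ∀ x, V x = (lam₂ - lam₁)⁻¹ *
        ((∫ s in Set.Iic x, Real.exp (lam₁ * (x - s)) * u s) +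
         (∫ s in Set.Ici x, Real.exp (lam₂ * (x - s)) * u s))) :
    ContDiff ℝ 2 V ∧
    (∀ x, deriv (deriv V) x + c * deriv V x + u x - V x = 0) ∧
    (∀ x, 0 ≤ V x ∧ V x ≤ min (Real.exp (-lam * x) / (1 + a)) η) ∧
    ((∀ x, 0 < u x) → ∀ x, 0 < V x) := by
  obtain ⟨h₁, h₂, hsum, hprod⟩ := roots_sq_add_mul_sub_one hlam₁ hlam₂
  obtain ⟨hlam0, hlamc, hroot⟩ := root_sq_sub_mul_add ha hc hlam
  have hu0 : ∀ s, 0 ≤ u s := fun s => (hubd s).1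
  have hM : ∀ s, ‖u s‖ ≤ η := fun s => by
    rw [norm_of_nonneg (hu0 s)]
    exact (hubd s).2.trans (min_le_right _ _)
  obtain rfl : V = greenConv lam₁ lam₂ u := funext hV
  refine ⟨contDiff_two_greenConv h₁ h₂ hu hM, greenConv_ode h₁ h₂ hsum hprod hu hM,
    fun x => ⟨greenConv_nonneg (h₁.trans h₂).le hu0 x, le_min ?_ ?_⟩,
    fun hpos => greenConv_pos h₁ h₂ hu hM hpos⟩
  · have hle : ∀ s, u s ≤ 1 * exp (-lam * s) := fun s => by
      rw [one_mul]
      exact (hubd s).2.trans (min_le_left _ _)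
    simpa [show 1 + c * lam - lam ^ 2 = 1 + a by linarith] using
      greenConv_le_of_le_exp (by linarith) (by linarith) hsum hprod hu0 hle x
  · have hle : ∀ s, u s ≤ η * exp (-0 * s) := fun s => by
      simpa using (hubd s).2.trans (min_le_right _ _)
    simpa using greenConv_le_of_le_exp (by linarith) (by linarith) hsum hprod hu0 hle x

/-- the integral representation `V(·;u)` solves
`V'' + cV' + u − V = 0` and obeys the pointwise bounds of Lemma 3.2. -/
theorem V_solves_and_bounds
    (a c : ℝ) (ha : 0 < a) (hc : 2 * Real.sqrt a ≤ c)
    (lam lam₁ lam₂ : ℝ)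
    (hlam : lam = (c - Real.sqrt (c ^ 2 - 4 * a)) / 2)
    (hlam₁ : lam₁ = (-c - Real.sqrt (c ^ 2 + 4)) / 2)
    (hlam₂ : lam₂ = (-c + Real.sqrt (c ^ 2 + 4)) / 2)
    (η : ℝ) (hη : 0 < η)
    (u : ℝ → ℝ) (hu : Continuous u)
    (hubd : ∀ x, 0 ≤ u x ∧ u x ≤ min (Real.exp (-lam * x)) η)
    (V : ℝ → ℝ)
    (hV : ∀ x, V x = (lam₂ - lam₁)⁻¹ *
        ((∫ s in Set.Iic x, Real.exp (lam₁ * (x - s)) * u s) +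
         (∫ s in Set.Ici x, Real.exp (lam₂ * (x - s)) * u s))) :
    ContDiff ℝ 2 V ∧
    (∀ x, deriv (deriv V) x + c * deriv V x + u x - V x = 0) ∧
    (∀ x, 0 ≤ V x ∧ V x ≤ min (Real.exp (-lam * x) / (1 + a)) η) ∧
    ((∀ x, 0 < u x) → ∀ x, 0 < V x) :=
  V_solves_and_bounds_general a c ha hc lam lam₁ lam₂ hlam hlam₁ hlam₂ η u hu hubd V hV
end

section
/- Let a, m > 0 and c ≥ 2√a, set λ = (c − √(c² − 4a))/2, φ(x) = 1 + e^{−λx}/(1+a) and θ₁(x) = (c − √(c² − 4a·φ(x)^{−m}))/(2·φ(x)^{−m}). If V : ℝ → ℝ satisfies 0 ≤ V(x) ≤ e^{−λx}/(1+a) for all x ∈ ℝ, then for all x ∈ ℝ: (1 + V(x))^{−m}·θ₁(x)² − c·θ₁(x) + a ≥ 0. -/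
open Real Filter

/-! `θ₁(x)` is a root of `t ↦ φ(x)^{-m} t² - c t + a`, and since `0 ≤ V ≤ φ - 1` the factor
`(1 + V(x))^{-m}` is at least `φ(x)^{-m}`; raising the leading coefficient of a quadratic can only
increase its value at any point. -/

lemma four_mul_mul_le_sq_of_two_sqrt_le {a c g : ℝ} (hg₀ : 0 ≤ g) (hg₁ : g ≤ 1)
    (hc : 2 * √a ≤ c) : 4 * a * g ≤ c ^ 2 := by
  rcases le_or_gt 0 a with ha | ha
  · have hsq : (2 * √a) ^ 2 = 4 * a := by rw [mul_pow, sq_sqrt ha]; ring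
    calc 4 * a * g ≤ 4 * a := by nlinarith
      _ = (2 * √a) ^ 2 := hsq.symm
      _ ≤ c ^ 2 := pow_le_pow_left₀ (by positivity) hc 2
  · nlinarith [sq_nonneg c]

lemma quadratic_at_smaller_root_eq_zero {g c a : ℝ} (hg : g ≠ 0) (hdisc : 0 ≤ c ^ 2 - 4 * a * g) :
    g * ((c - √(c ^ 2 - 4 * a * g)) / (2 * g)) ^ 2 - c * ((c - √(c ^ 2 - 4 * a * g)) / (2 * g))
      + a = 0 := by
  have hs := sq_sqrt hdisc
  generalize √(c ^ 2 - 4 * a * g) = s at hs ⊢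
  field_simp
  linear_combination hs

lemma quadratic_nonneg_of_root_of_le {g g' c a t : ℝ} (hroot : g * t ^ 2 - c * t + a = 0)
    (hg : g ≤ g') : 0 ≤ g' * t ^ 2 - c * t + a := by
  nlinarith [mul_le_mul_of_nonneg_right hg (sq_nonneg t)]

theorem gamma_theta1_quadratic_nonneg_general
    (a m c : ℝ) (hm : 0 < m) (hc : 2 * Real.sqrt a ≤ c)
    (lam : ℝ)
    (φ θ₁ : ℝ → ℝ)
    (hφ : ∀ x, φ x = 1 + Real.exp (-lam * x) / (1 + a))
    (hθ₁ : ∀ x, θ₁ x = (c - Real.sqrt (c ^ 2 - 4 * a * (φ x) ^ (-m)))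
        / (2 * (φ x) ^ (-m)))
    (V : ℝ → ℝ)
    (hV : ∀ x, 0 ≤ V x ∧ V x ≤ Real.exp (-lam * x) / (1 + a)) :
    ∀ x, (1 + V x) ^ (-m) * (θ₁ x) ^ 2 - c * θ₁ x + a ≥ 0 := by
  intro x
  obtain ⟨hV₀, hV₁⟩ := hV x
  have h1V : 1 + V x ≤ φ x := by rw [hφ x]; linarith
  have hφ₁ : 1 ≤ φ x := by linarith
  have hg₀ : 0 < φ x ^ (-m) := rpow_pos_of_pos (by linarith) _
  have hg₁ : φ x ^ (-m) ≤ 1 := rpow_le_one_of_one_le_of_nonpos hφ₁ (by linarith)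
  have hroot := quadratic_at_smaller_root_eq_zero hg₀.ne'
    (sub_nonneg.2 (four_mul_mul_le_sq_of_two_sqrt_le hg₀.le hg₁ hc))
  rw [← hθ₁ x] at hroot
  exact quadratic_nonneg_of_root_of_le hroot
    (rpow_le_rpow_of_nonpos (by linarith) h1V (by linarith))

/-- `γ(V)θ₁² − cθ₁ + a ≥ 0` whenever `0 ≤ V(x) ≤ e^{−λx}/(1+a)`. -/
theorem gamma_theta1_quadratic_nonneg
    (a m c : ℝ) (ha : 0 < a) (hm : 0 < m) (hc : 2 * Real.sqrt a ≤ c)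
    (lam : ℝ) (hlam : lam = (c - Real.sqrt (c ^ 2 - 4 * a)) / 2)
    (φ θ₁ : ℝ → ℝ)
    (hφ : ∀ x, φ x = 1 + Real.exp (-lam * x) / (1 + a))
    (hθ₁ : ∀ x, θ₁ x = (c - Real.sqrt (c ^ 2 - 4 * a * (φ x) ^ (-m)))
        / (2 * (φ x) ^ (-m)))
    (V : ℝ → ℝ)
    (hV : ∀ x, 0 ≤ V x ∧ V x ≤ Real.exp (-lam * x) / (1 + a)) :
    ∀ x, (1 + V x) ^ (-m) * (θ₁ x) ^ 2 - c * θ₁ x + a ≥ 0 :=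
  gamma_theta1_quadratic_nonneg_general a m c hm hc lam φ θ₁ hφ hθ₁ V hV
end

section
/- Let a, m > 0 and c = 2√a, so λ = √a, set φ(x) = 1 + e^{−λx}/(1+a), θ₁(x) = (c − √(c² − 4a·φ(x)^{−m}))/(2·φ(x)^{−m}) and θ₂(x) = θ₁(x) + λ/4. Then there exists x₀ ∈ ℝ such that for every x > x₀ and every real number V with 0 ≤ V ≤ e^{−λx}/(1+a): (1 + V)^{−m}·θ₂(x)² − c·θ₂(x) + a ≥ a/64. -/
/-!
Since `1 + V ≤ φ x`, the factor `(1 + V)^(-m)` is at least `φ(x)^(-m)`, so it suffices to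
bound `φ(x)^(-m) θ₂(x)² − c θ₂(x) + a` from below. As `x → ∞`, `φ(x)^(-m) → 1` and `θ₁(x)`
tends to the double root `λ = c/2` of `θ² − cθ + a`; hence `θ₂(x) → 5λ/4`, where the quadratic
equals `λ²/16 = a/16`, strictly above `a/64`.
-/

open Real Filter Topology

lemma tendsto_one_add_exp_neg_mul_div_atTop {lam : ℝ} (hlam : 0 < lam) (b : ℝ) :
    Tendsto (fun x => 1 + exp (-lam * x) / b) atTop (𝓝 1) := by
  have hexp : Tendsto (fun x => exp (-lam * x)) atTop (𝓝 0) := by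
    simpa using tendsto_rpow_mul_exp_neg_mul_atTop_nhds_zero 0 lam hlam
  simpa using (hexp.div_const b).const_add 1

lemma tendsto_smaller_root {α : Type*} {l : Filter α} {u : α → ℝ} (hu : Tendsto u l (𝓝 1))
    (a c : ℝ) :
    Tendsto (fun x => (c - √(c ^ 2 - 4 * a * u x)) / (2 * u x)) l
      (𝓝 ((c - √(c ^ 2 - 4 * a)) / 2)) := by
  have hroot : Tendsto (fun x => √(c ^ 2 - 4 * a * u x)) l (𝓝 √(c ^ 2 - 4 * a * 1)) :=
    (continuous_sqrt.tendsto _).comp (tendsto_const_nhds.sub (hu.const_mul (4 * a)))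
  have h := Filter.Tendsto.div ((tendsto_const_nhds (x := c)).sub hroot) (hu.const_mul 2)
    (by norm_num)
  rw [mul_one, mul_one] at h
  exact h

lemma smaller_root_of_critical {a : ℝ} (ha : 0 ≤ a) :
    (2 * √a - √((2 * √a) ^ 2 - 4 * a)) / 2 = √a := by
  rw [mul_pow, sq_sqrt ha, show (2 : ℝ) ^ 2 * a - 4 * a = 0 by ring, sqrt_zero]
  ring

/-- for `c = 2√a`, `γ(V)θ₂² − cθ₂ + a ≥ a/64` for large `x`. -/
theorem gamma_theta2_quadratic_lower_critical
    (a m c : ℝ) (ha : 0 < a) (hm : 0 < m) (hc : c = 2 * Real.sqrt a)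
    (lam : ℝ) (hlam : lam = Real.sqrt a)
    (φ θ₁ θ₂ : ℝ → ℝ)
    (hφ : ∀ x, φ x = 1 + Real.exp (-lam * x) / (1 + a))
    (hθ₁ : ∀ x, θ₁ x = (c - Real.sqrt (c ^ 2 - 4 * a * (φ x) ^ (-m)))
        / (2 * (φ x) ^ (-m)))
    (hθ₂ : ∀ x, θ₂ x = θ₁ x + lam / 4) :
    ∃ x₀ : ℝ, ∀ x > x₀, ∀ V : ℝ, 0 ≤ V → V ≤ Real.exp (-lam * x) / (1 + a) →
      (1 + V) ^ (-m) * (θ₂ x) ^ 2 - c * θ₂ x + a ≥ a / 64 := by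
  subst hc hlam
  have hφ_lim : Tendsto φ atTop (𝓝 1) := by
    simpa only [← funext hφ] using tendsto_one_add_exp_neg_mul_div_atTop (sqrt_pos.mpr ha) (1 + a)
  have hu_lim : Tendsto (fun x => φ x ^ (-m)) atTop (𝓝 1) := by
    simpa using hφ_lim.rpow_const (p := -m) (Or.inl one_ne_zero)
  have hθ₂_lim : Tendsto θ₂ atTop (𝓝 (5 * √a / 4)) := by
    have h := (tendsto_smaller_root hu_lim a (2 * √a)).add_const (√a / 4)
    rw [smaller_root_of_critical ha.le, show √a + √a / 4 = 5 * √a / 4 by ring] at h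
    exact h.congr fun x => by rw [hθ₂, hθ₁]
  have hF_lim : Tendsto (fun x => φ x ^ (-m) * θ₂ x ^ 2 - 2 * √a * θ₂ x + a) atTop
      (𝓝 (a / 16)) := by
    have h := ((hu_lim.mul (hθ₂_lim.pow 2)).sub (hθ₂_lim.const_mul (2 * √a))).add_const a
    convert h using 2
    linear_combination (15 / 16 : ℝ) * sq_sqrt ha.le
  obtain ⟨x₀, hx₀⟩ :=
    eventually_atTop.mp (hF_lim.eventually_const_le (by linarith : a / 64 < a / 16))
  refine ⟨x₀, fun x hx V hV₀ hV => le_trans (hx₀ x hx.le) ?_⟩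
  have hVφ : 1 + V ≤ φ x := by rw [hφ]; linarith
  have hγ : φ x ^ (-m) ≤ (1 + V) ^ (-m) := rpow_le_rpow_of_nonpos (by linarith) hVφ (by linarith)
  gcongr
end

section
/- Let a, m > 0 and c > 2√a, set λ = (c − √(c² − 4a))/2, φ(x) = 1 + e^{−λx}/(1+a), θ₁(x) = (c − √(c² − 4a·φ(x)^{−m}))/(2·φ(x)^{−m}), and fix k₀ > max{2λ/(c − 2λ), 2} and θ₂(x) = θ₁(x) + λ/k₀. Then there exists x₀ ∈ ℝ such that for every x > x₀ and every real number V ≥ 0: (1 + V)^{−m}·θ₂(x)² − c·θ₂(x) + a ≤ −λ(c − 2λ)/(4k₀). -/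
/-!
Far to the right `φ → 1`, so `θ₁` tends to the smaller root `λ` of `t² − c t + a`, and `θ₂` to
`λ + ε` with `ε = λ / k₀`. Since `λ` is a root, the quadratic at `λ + ε` equals `ε² − ε (c − 2λ)`,
and the choice of `k₀` gives `2ε < c − 2λ`, which leaves a margin below `−ε (c − 2λ) / 4`.
A motility factor `(1 + V)^(−m) ≤ 1` only lowers the quadratic term, uniformly in `V ≥ 0`.
-/

open Real Filter Topology

section SmallerRoot

variable {a c : ℝ}

lemma sqrt_discrim_pos_and_lt (ha : 0 < a) (hc : 2 * √a < c) :
    0 < √(c ^ 2 - 4 * a) ∧ √(c ^ 2 - 4 * a) < c := by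
  have hc0 : 0 < c := (mul_nonneg zero_le_two (sqrt_nonneg a)).trans_lt hc
  have hdisc : 0 < c ^ 2 - 4 * a := by nlinarith [sq_sqrt ha.le, sqrt_nonneg a]
  refine ⟨sqrt_pos.2 hdisc, (sqrt_lt' hc0).2 (by linarith)⟩

lemma smallerRoot_isRoot (hdisc : 0 ≤ c ^ 2 - 4 * a) :
    ((c - √(c ^ 2 - 4 * a)) / 2) ^ 2 - c * ((c - √(c ^ 2 - 4 * a)) / 2) + a = 0 := by
  nlinarith [sq_sqrt hdisc]

lemma Filter.Tendsto.smallerRoot_div {α : Type*} {l : Filter α} {g : α → ℝ} {g₀ : ℝ}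
    (hg : Tendsto g l (𝓝 g₀)) (hg₀ : g₀ ≠ 0) :
    Tendsto (fun x => (c - √(c ^ 2 - 4 * a * g x)) / (2 * g x)) l
      (𝓝 ((c - √(c ^ 2 - 4 * a * g₀)) / (2 * g₀))) :=
  (tendsto_const_nhds.sub ((continuous_sqrt.tendsto _).comp
    (tendsto_const_nhds.sub (hg.const_mul _)))).div (hg.const_mul 2) (by simpa using hg₀)

end SmallerRoot

lemma shifted_root_quadratic_lt {a c r ε : ℝ} (hr : r ^ 2 - c * r + a = 0) (hε : 0 < ε)
    (hgap : 4 * ε < 3 * (c - 2 * r)) :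
    (r + ε) ^ 2 - c * (r + ε) + a < -(ε * (c - 2 * r)) / 4 := by
  have hshift : (r + ε) ^ 2 - c * (r + ε) + a = ε ^ 2 - ε * (c - 2 * r) := by linear_combination hr
  rw [hshift]
  nlinarith

lemma eventually_rpow_mul_sq_sub_le {α : Type*} {l : Filter α} {θ : α → ℝ}
    {L a b c m : ℝ} (hθ : Tendsto θ l (𝓝 L)) (hm : 0 ≤ m) (hL : L ^ 2 - c * L + a < b) :
    ∀ᶠ x in l, ∀ V : ℝ, 0 ≤ V → (1 + V) ^ (-m) * θ x ^ 2 - c * θ x + a ≤ b := by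
  have hq : Tendsto (fun x => θ x ^ 2 - c * θ x + a) l (𝓝 (L ^ 2 - c * L + a)) :=
    ((hθ.pow 2).sub (hθ.const_mul c)).add_const a
  filter_upwards [hq.eventually_lt_const hL] with x hx V hV
  have hγ : (1 + V) ^ (-m) ≤ 1 := rpow_le_one_of_one_le_of_nonpos (by linarith) (by linarith)
  nlinarith [mul_le_of_le_one_left (sq_nonneg (θ x)) hγ]

/-- for `c > 2√a`, `γ(V)θ₂² − cθ₂ + a ≤ −λ(c−2λ)/(4k₀)` for large `x`. -/
theorem gamma_theta2_quadratic_upper_supercritical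
    (a m c : ℝ) (ha : 0 < a) (hm : 0 < m) (hc : 2 * Real.sqrt a < c)
    (lam : ℝ) (hlam : lam = (c - Real.sqrt (c ^ 2 - 4 * a)) / 2)
    (φ θ₁ θ₂ : ℝ → ℝ)
    (hφ : ∀ x, φ x = 1 + Real.exp (-lam * x) / (1 + a))
    (hθ₁ : ∀ x, θ₁ x = (c - Real.sqrt (c ^ 2 - 4 * a * (φ x) ^ (-m)))
        / (2 * (φ x) ^ (-m)))
    (k₀ : ℝ) (hk₀ : k₀ > max (2 * lam / (c - 2 * lam)) 2)
    (hθ₂ : ∀ x, θ₂ x = θ₁ x + lam / k₀) :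
    ∃ x₀ : ℝ, ∀ x > x₀, ∀ V : ℝ, 0 ≤ V →
      (1 + V) ^ (-m) * (θ₂ x) ^ 2 - c * θ₂ x + a ≤ -(lam * (c - 2 * lam)) / (4 * k₀) := by
  obtain ⟨hs_pos, hs_lt⟩ := sqrt_discrim_pos_and_lt ha hc
  have hgap : c - 2 * lam = √(c ^ 2 - 4 * a) := by rw [hlam]; ring
  have hlam_pos : 0 < lam := by rw [hlam]; linarith
  have hroot : lam ^ 2 - c * lam + a = 0 := hlam ▸ smallerRoot_isRoot (sqrt_pos.1 hs_pos).le
  have hk : 2 * lam / (c - 2 * lam) < k₀ := (le_max_left _ _).trans_lt hk₀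
  have hk_pos : 0 < k₀ := (div_pos (by positivity) (hgap ▸ hs_pos)).trans hk
  have hε : 2 * (lam / k₀) < c - 2 * lam := by
    rw [div_lt_iff₀ (hgap ▸ hs_pos)] at hk
    rw [mul_div_assoc', div_lt_iff₀ hk_pos]
    linarith
  have hφ_lim : Tendsto φ atTop (𝓝 1) := by
    simpa only [← funext hφ] using tendsto_one_add_exp_neg_mul_div_atTop hlam_pos (1 + a)
  have hθ₁_lim : Tendsto θ₁ atTop (𝓝 lam) := by
    have := (hφ_lim.rpow_const (Or.inl one_ne_zero) (p := -m)).smallerRoot_div (a := a) (c := c)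
    simpa [← funext hθ₁, ← hlam] using this
  have hθ₂_lim : Tendsto θ₂ atTop (𝓝 (lam + lam / k₀)) := by
    simpa only [← funext hθ₂] using hθ₁_lim.add_const (lam / k₀)
  have hbound := shifted_root_quadratic_lt hroot (div_pos hlam_pos hk_pos) (by linarith)
  rw [show -(lam / k₀ * (c - 2 * lam)) / 4 = -(lam * (c - 2 * lam)) / (4 * k₀) by ring] at hbound
  obtain ⟨x₀, hx₀⟩ := eventually_atTop.1 (eventually_rpow_mul_sq_sub_le hθ₂_lim hm.le hbound)
  exact ⟨x₀, fun x hx => hx₀ x hx.le⟩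
end

section
/- Let a, m > 0 and c ≥ 2√a, set λ = (c − √(c² − 4a))/2, φ(x) = 1 + e^{−λx}/(1+a) and θ₁(x) = (c − √(c² − 4a·φ(x)^{−m}))/(2·φ(x)^{−m}). Then lim_{x→+∞} θ₁(x) = λ and 0 < θ₁(x) < λ ≤ √a for all x ∈ ℝ. -/
/-!
`θ₁(x)` is the smaller root of `b θ² - c θ + a = 0` at `b = φ(x)^(-m)`, and `λ` is that root at
`b = 1`. Rationalizing, the smaller root is `2a / (c + √(c² - 4ab))`, which is positive and strictly
increasing in `b` on `(0, c²/(4a)]`. Since `φ > 1` and `φ → 1` at `+∞`, `b = φ^(-m)` lies in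
`(0, 1)` and tends to `1`, which gives `0 < θ₁ < λ` and `θ₁ → λ`; finally `λ ≤ 2a / c ≤ √a`.
-/

open Real Filter Topology

noncomputable def quadRoot (a c b : ℝ) : ℝ := (c - √(c ^ 2 - 4 * a * b)) / (2 * b)

section QuadRoot

variable {a c b : ℝ}

lemma quadRoot_eq_div (hc : 0 < c) (hb : b ≠ 0) (hdisc : 4 * a * b ≤ c ^ 2) :
    quadRoot a c b = 2 * a / (c + √(c ^ 2 - 4 * a * b)) := by
  have hsq := sq_sqrt (sub_nonneg.2 hdisc)
  rw [quadRoot, div_eq_div_iff (mul_ne_zero two_ne_zero hb) (by positivity)]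
  linear_combination -hsq

lemma quadRoot_pos (ha : 0 < a) (hc : 0 < c) (hb : 0 < b) (hdisc : 4 * a * b ≤ c ^ 2) :
    0 < quadRoot a c b := by
  rw [quadRoot_eq_div hc hb.ne' hdisc]
  positivity

lemma quadRoot_lt_quadRoot {b' : ℝ} (ha : 0 < a) (hc : 0 < c) (hb : 0 < b) (hbb' : b < b')
    (hdisc : 4 * a * b' ≤ c ^ 2) : quadRoot a c b < quadRoot a c b' := by
  have hdisc_b : 4 * a * b ≤ c ^ 2 := by nlinarith
  rw [quadRoot_eq_div hc hb.ne' hdisc_b, quadRoot_eq_div hc (hb.trans hbb').ne' hdisc]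
  have hsqrt : √(c ^ 2 - 4 * a * b') < √(c ^ 2 - 4 * a * b) :=
    sqrt_lt_sqrt (sub_nonneg.2 hdisc) (by nlinarith)
  exact div_lt_div_of_pos_left (by positivity) (by positivity) (by linarith)

lemma quadRoot_one_le_sqrt (ha : 0 < a) (hc : 2 * √a ≤ c) : quadRoot a c 1 ≤ √a := by
  have hsa : 0 < √a := sqrt_pos.2 ha
  have hdisc : 4 * a * 1 ≤ c ^ 2 := by nlinarith [sq_sqrt ha.le]
  calc quadRoot a c 1 = 2 * a / (c + √(c ^ 2 - 4 * a * 1)) :=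
        quadRoot_eq_div (by linarith) one_ne_zero hdisc
    _ ≤ 2 * a / (2 * √a) :=
        div_le_div_of_nonneg_left (by positivity) (by positivity)
          (by linarith [sqrt_nonneg (c ^ 2 - 4 * a * 1)])
    _ = √a := by
        field_simp
        exact (sq_sqrt ha.le).symm

lemma continuousAt_quadRoot (hb : b ≠ 0) : ContinuousAt (quadRoot a c) b :=
  ContinuousAt.div (by fun_prop) (by fun_prop) (mul_ne_zero two_ne_zero hb)

end QuadRoot

lemma tendsto_one_add_exp_neg_mul_div {k : ℝ} (hk : 0 < k) (d : ℝ) :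
    Tendsto (fun x => 1 + exp (-k * x) / d) atTop (𝓝 1) := by
  have hexp : Tendsto (fun x => exp (-k * x)) atTop (𝓝 0) := by
    simpa only [neg_mul, Function.comp_def, id] using
      tendsto_exp_neg_atTop_nhds_zero.comp (tendsto_id.const_mul_atTop hk)
  simpa using (hexp.div_const d).const_add 1

/-- `θ₁(x) → λ` as `x → +∞` and `0 < θ₁(x) < λ ≤ √a` on `ℝ`. -/
theorem theta1_limit_and_bounds
    (a m c : ℝ) (ha : 0 < a) (hm : 0 < m) (hc : 2 * Real.sqrt a ≤ c)
    (lam : ℝ) (hlam : lam = (c - Real.sqrt (c ^ 2 - 4 * a)) / 2)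
    (φ θ₁ : ℝ → ℝ)
    (hφ : ∀ x, φ x = 1 + Real.exp (-lam * x) / (1 + a))
    (hθ₁ : ∀ x, θ₁ x = (c - Real.sqrt (c ^ 2 - 4 * a * (φ x) ^ (-m)))
        / (2 * (φ x) ^ (-m))) :
    Tendsto θ₁ atTop (nhds lam) ∧
    (∀ x, 0 < θ₁ x ∧ θ₁ x < lam) ∧ lam ≤ Real.sqrt a := by
  have hc0 : 0 < c := lt_of_lt_of_le (by positivity) hc
  have hdisc : 4 * a * 1 ≤ c ^ 2 := by nlinarith [sq_sqrt ha.le, sqrt_nonneg a]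
  have hlam_root : lam = quadRoot a c 1 := by simp [hlam, quadRoot]
  have hθ_root : ∀ x, θ₁ x = quadRoot a c (φ x ^ (-m)) := hθ₁
  have hlam_pos : 0 < lam := hlam_root ▸ quadRoot_pos ha hc0 one_pos hdisc
  have hφ_gt : ∀ x, 1 < φ x := fun x => hφ x ▸ lt_add_of_pos_right 1 (by positivity)
  have hb_pos : ∀ x, 0 < φ x ^ (-m) := fun x => rpow_pos_of_pos (one_pos.trans (hφ_gt x)) _
  have hb_lt : ∀ x, φ x ^ (-m) < 1 := fun x => rpow_lt_one_of_one_lt_of_neg (hφ_gt x) (by linarith)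
  refine ⟨?_, fun x => ?_, hlam_root ▸ quadRoot_one_le_sqrt ha hc⟩
  · have hφ_lim : Tendsto φ atTop (𝓝 1) :=
      (tendsto_one_add_exp_neg_mul_div hlam_pos (1 + a)).congr fun x => (hφ x).symm
    have hb_lim : Tendsto (fun x => φ x ^ (-m)) atTop (𝓝 1) := by
      simpa using hφ_lim.rpow_const (Or.inl one_ne_zero)
    rw [hlam_root]
    exact ((continuousAt_quadRoot one_ne_zero).tendsto.comp hb_lim).congr fun x => (hθ_root x).symm
  · rw [hθ_root, hlam_root]
    exact ⟨quadRoot_pos ha hc0 (hb_pos x) (by nlinarith [hb_lt x]),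
      quadRoot_lt_quadRoot ha hc0 (hb_pos x) (hb_lt x) hdisc⟩
end

section
/- Let a, m > 0, b ≥ b*(m,a) and c ∈ [2√a, c*(a,b,m)]. Then b − m(1 + c/√(1+a)) ≥ 2√(m(m+1)a/(1+a)). -/
open Real

lemma sqrt_mul_succ_mul_div_one_add {m a : ℝ} (hm : 0 < m) (ha : 0 ≤ a) :
    √(m * (m + 1) * a / (1 + a)) = m * √(1 + 1 / m) * √a / √(1 + a) := by
  have h : m * (m + 1) * a / (1 + a) = m ^ 2 * (1 + 1 / m) * (a / (1 + a)) := by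
    field_simp
  rw [h, sqrt_mul (by positivity), sqrt_mul (by positivity), sqrt_sq hm.le, sqrt_div ha,
    mul_div_assoc]

/-- With `s = √(1+a)`, `r = √a`, `t = √(1+1/m)`, the hypothesis is `c ≤ c*(a,b,m)`; the
slack left in the conclusion is `(2b/3)·s + 2m·r ≥ 0`. -/
lemma two_mul_le_sub_of_le_cstar {b m c r s t : ℝ} (hb : 0 ≤ b) (hm : 0 < m) (hr : 0 ≤ r)
    (hs : 0 < s) (hc : c ≤ (b - 3 * m) * s / (3 * m) - 2 * r * (1 + t)) :
    2 * (m * t * r / s) ≤ b - m * (1 + c / s) := by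
  have hmc : m * c ≤ (b - 3 * m) * s / 3 - 2 * m * r * (1 + t) :=
    calc m * c ≤ m * ((b - 3 * m) * s / (3 * m) - 2 * r * (1 + t)) := by gcongr
      _ = (b - 3 * m) * s / 3 - 2 * m * r * (1 + t) := by field_simp
  have hbs : 0 ≤ b * s := mul_nonneg hb hs.le
  have hmr : 0 ≤ m * r := mul_nonneg hm.le hr
  have key : b - m * (1 + c / s) - 2 * (m * t * r / s)
      = ((b - m) * s - m * c - 2 * m * t * r) / s := by
    field_simp; ring
  rw [← sub_nonneg, key]
  apply div_nonneg _ hs.le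
  linear_combination hmc + (2 / 3) * hbs + 2 * hmr

theorem b_sub_m_bound_general
    (a b m c : ℝ) (ha : 0 < a) (hb : 0 < b) (hm : 0 < m)
    (hc2 : c ≤ (b - 3 * m) * Real.sqrt (1 + a) / (3 * m)
        - 2 * Real.sqrt a * (1 + Real.sqrt (1 + 1 / m))) :
    b - m * (1 + c / Real.sqrt (1 + a))
      ≥ 2 * Real.sqrt (m * (m + 1) * a / (1 + a)) := by
  rw [sqrt_mul_succ_mul_div_one_add hm ha.le]
  exact two_mul_le_sub_of_le_cstar hb.le hm (sqrt_nonneg a) (sqrt_pos.2 (by linarith)) hc2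

/-- for `b ≥ b*(m,a)` and `c ∈ [2√a, c*(a,b,m)]`,
`b − m(1 + c/√(1+a)) ≥ 2√(m(m+1)a/(1+a))`. -/
theorem b_sub_m_bound
    (a b m c : ℝ) (ha : 0 < a) (hb : 0 < b) (hm : 0 < m)
    (hbstar : b ≥ 3 * m * (1 + 2 * Real.sqrt (a / (1 + a)) * (2 + Real.sqrt (1 + 1 / m))))
    (hc1 : 2 * Real.sqrt a ≤ c)
    (hc2 : c ≤ (b - 3 * m) * Real.sqrt (1 + a) / (3 * m)
        - 2 * Real.sqrt a * (1 + Real.sqrt (1 + 1 / m))) :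
    b - m * (1 + c / Real.sqrt (1 + a))
      ≥ 2 * Real.sqrt (m * (m + 1) * a / (1 + a)) :=
  b_sub_m_bound_general a b m c ha hb hm hc2
end
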